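/- arXiv:2511.17830 — 3 statements merged into one kernel-verified Lean document; each statement's English description precedes it below -/
import Mathlib

section
/- There exists a constant C > 0, depending only on α, γ, μ₁, μ₂, ξ and h, such that for every classical solution ζ of the linear μ-system and every t > 0, the energy satisfies (d/dt)E(t) ≤ −C ( ∫₀^L (∂ₓζ(0,y,t))² dy + ∫₀^L (∂ᵧζ(0,y,t))² dy + ∫_Ω a(x,y) ζ(x,y,t)² dx dy + ∫_Ω a(x,y) ζ(x,y,t−h)² dx dy ). In particular, E is non-increasing. -/
open MeasureTheory intervalIntegral Set

noncomputable section

/-- Partial derivative in time. -/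
def pT (ζ : ℝ → ℝ → ℝ → ℝ) (x y t : ℝ) : ℝ := deriv (fun τ => ζ x y τ) t
/-- Partial derivative in `x`. -/
def pX (ζ : ℝ → ℝ → ℝ → ℝ) (x y t : ℝ) : ℝ := deriv (fun s => ζ s y t) x
/-- Third partial derivative in `x`. -/
def pX3 (ζ : ℝ → ℝ → ℝ → ℝ) (x y t : ℝ) : ℝ := iteratedDeriv 3 (fun s => ζ s y t) x
/-- Partial derivative in `y`. -/
def pY (ζ : ℝ → ℝ → ℝ → ℝ) (x y t : ℝ) : ℝ := deriv (fun r => ζ x r t) y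
/-- Mixed derivative `∂ₓ∂ᵧ²`. -/
def pXYY (ζ : ℝ → ℝ → ℝ → ℝ) (x y t : ℝ) : ℝ :=
  deriv (fun s => iteratedDeriv 2 (fun r => ζ s r t) y) x

/-- Smoothness of a function of three real variables. -/
def Smooth3 (ζ : ℝ → ℝ → ℝ → ℝ) : Prop :=
  ContDiff ℝ (⊤ : ℕ∞) (fun p : ℝ × ℝ × ℝ => ζ p.1 p.2.1 p.2.2)

/-- Boundary conditions of the ZK-type systems on `Ω = (0,L)×(0,L)`. -/
def ZKbc (L : ℝ) (ζ : ℝ → ℝ → ℝ → ℝ) : Prop :=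
  ∀ t > (0:ℝ),
    (∀ y ∈ Ioo (0:ℝ) L,
      ζ 0 y t = 0 ∧ ζ L y t = 0 ∧ pX ζ L y t = 0 ∧ pY ζ L y t = 0) ∧
    (∀ x ∈ Ioo (0:ℝ) L, ζ x 0 t = 0 ∧ ζ x L t = 0)

/-- `M` is the essential supremum of `f` on `Ω = (0,L)×(0,L)`:
the greatest lower bound of the set of a.e. upper bounds. -/
def IsEssSupOn (L : ℝ) (f : ℝ → ℝ → ℝ) (M : ℝ) : Prop :=
  IsGLB {c : ℝ | ∀ᵐ p ∂(volume.restrict (Ioo (0:ℝ) L ×ˢ Ioo (0:ℝ) L)),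
    f p.1 p.2 ≤ c} M

/-- Bounded, nonnegative, measurable coefficient. -/
def Coeff (f : ℝ → ℝ → ℝ) : Prop :=
  Measurable (fun p : ℝ × ℝ => f p.1 p.2) ∧ (∀ x y, 0 ≤ f x y) ∧ ∃ M, ∀ x y, f x y ≤ M

/-- Squared `H`-norm of an initial state, with weight `w` on the delay component. -/
def Hn2 (L w : ℝ) (f : ℝ → ℝ → ℝ) (g : ℝ → ℝ → ℝ → ℝ) : ℝ :=
  (∫ x in (0:ℝ)..L, ∫ y in (0:ℝ)..L, (f x y)^2)
  + w * (∫ x in (0:ℝ)..L, ∫ y in (0:ℝ)..L, ∫ ρ in (0:ℝ)..1, (g x y ρ)^2)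

/-- `L²(Ω)` norm of `w(·,·,t)`. -/
def L2n (L : ℝ) (w : ℝ → ℝ → ℝ → ℝ) (t : ℝ) : ℝ :=
  Real.sqrt (∫ x in (0:ℝ)..L, ∫ y in (0:ℝ)..L, (w x y t)^2)

/-- Squared `H¹(Ω)` norm of `w(·,·,t)`. -/
def H1n2 (L : ℝ) (w : ℝ → ℝ → ℝ → ℝ) (t : ℝ) : ℝ :=
  ∫ x in (0:ℝ)..L, ∫ y in (0:ℝ)..L,
    ((w x y t)^2 + (pX w x y t)^2 + (pY w x y t)^2)

/-- Classical solution of the delayed ZK system. -/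
def IsZKSol (L α γ h : ℝ) (a b : ℝ → ℝ → ℝ) (ζ : ℝ → ℝ → ℝ → ℝ) : Prop :=
  Smooth3 ζ ∧ ZKbc L ζ ∧
  ∀ x ∈ Ioo (0:ℝ) L, ∀ y ∈ Ioo (0:ℝ) L, ∀ t > (0:ℝ),
    pT ζ x y t + α * pX3 ζ x y t + γ * pXYY ζ x y t + ζ x y t * pX ζ x y t
      + a x y * ζ x y t + b x y * ζ x y (t - h) = 0

/-- Energy of the delayed ZK system. -/
def zkE (L h : ℝ) (b : ℝ → ℝ → ℝ) (ζ : ℝ → ℝ → ℝ → ℝ) (t : ℝ) : ℝ :=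
  (1/2) * (∫ x in (0:ℝ)..L, ∫ y in (0:ℝ)..L, (ζ x y t)^2)
  + (h/2) * (∫ x in (0:ℝ)..L, ∫ y in (0:ℝ)..L, ∫ ρ in (0:ℝ)..1,
      b x y * (ζ x y (t - ρ*h))^2)

/-- Classical solution of the (nonlinear) μ-system. -/
def IsMuSol (L α γ h μ₁ μ₂ : ℝ) (a : ℝ → ℝ → ℝ) (ζ : ℝ → ℝ → ℝ → ℝ) : Prop :=
  Smooth3 ζ ∧ ZKbc L ζ ∧
  ∀ x ∈ Ioo (0:ℝ) L, ∀ y ∈ Ioo (0:ℝ) L, ∀ t > (0:ℝ),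
    pT ζ x y t + α * pX3 ζ x y t + γ * pXYY ζ x y t + ζ x y t * pX ζ x y t
      + a x y * (μ₁ * ζ x y t + μ₂ * ζ x y (t - h)) = 0

/-- Classical solution of the linear μ-system with source `f`. -/
def IsLinMuSolF (L α γ h μ₁ μ₂ : ℝ) (a : ℝ → ℝ → ℝ) (f : ℝ → ℝ → ℝ → ℝ)
    (ζ : ℝ → ℝ → ℝ → ℝ) : Prop :=
  Smooth3 ζ ∧ ZKbc L ζ ∧
  ∀ x ∈ Ioo (0:ℝ) L, ∀ y ∈ Ioo (0:ℝ) L, ∀ t > (0:ℝ),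
    pT ζ x y t + α * pX3 ζ x y t + γ * pXYY ζ x y t
      + a x y * (μ₁ * ζ x y t + μ₂ * ζ x y (t - h)) = f x y t

/-- Classical solution of the linear μ-system. -/
def IsLinMuSol (L α γ h μ₁ μ₂ : ℝ) (a : ℝ → ℝ → ℝ) (ζ : ℝ → ℝ → ℝ → ℝ) : Prop :=
  IsLinMuSolF L α γ h μ₁ μ₂ a (fun _ _ _ => 0) ζ

/-- Energy of the μ-system. -/
def muE (L h ξ : ℝ) (a : ℝ → ℝ → ℝ) (ζ : ℝ → ℝ → ℝ → ℝ) (t : ℝ) : ℝ :=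
  (1/2) * (∫ x in (0:ℝ)..L, ∫ y in (0:ℝ)..L, (ζ x y t)^2)
  + (ξ/2) * (∫ x in (0:ℝ)..L, ∫ y in (0:ℝ)..L, ∫ ρ in (0:ℝ)..1,
      a x y * (ζ x y (t - ρ*h))^2)

/-- Classical solution of the perturbed delayed ZK system with source `f`. -/
def IsPertSol (L α γ h ξ : ℝ) (a b : ℝ → ℝ → ℝ) (f : ℝ → ℝ → ℝ → ℝ)
    (ζ : ℝ → ℝ → ℝ → ℝ) : Prop :=
  Smooth3 ζ ∧ ZKbc L ζ ∧
  ∀ x ∈ Ioo (0:ℝ) L, ∀ y ∈ Ioo (0:ℝ) L, ∀ t > (0:ℝ),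
    pT ζ x y t + α * pX3 ζ x y t + γ * pXYY ζ x y t
      + a x y * ζ x y t + b x y * (ξ * ζ x y t + ζ x y (t - h)) = f x y t

/-- Energy `E_ξ` of the perturbed delayed ZK system. -/
def pertE (L h ξ : ℝ) (b : ℝ → ℝ → ℝ) (ζ : ℝ → ℝ → ℝ → ℝ) (t : ℝ) : ℝ :=
  (1/2) * (∫ x in (0:ℝ)..L, ∫ y in (0:ℝ)..L, (ζ x y t)^2)
  + (ξ*h/2) * (∫ x in (0:ℝ)..L, ∫ y in (0:ℝ)..L, ∫ ρ in (0:ℝ)..1,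
      b x y * (ζ x y (t - ρ*h))^2)
namespace MuProof

def pd (v : ℝ × ℝ × ℝ) (F : ℝ × ℝ × ℝ → ℝ) : ℝ × ℝ × ℝ → ℝ := fun p => fderiv ℝ F p v
def e1 : ℝ×ℝ×ℝ := (1,0,0)
def e2 : ℝ×ℝ×ℝ := (0,1,0)
def e3 : ℝ×ℝ×ℝ := (0,0,1)
def unc (ζ : ℝ → ℝ → ℝ → ℝ) : ℝ×ℝ×ℝ → ℝ := fun p => ζ p.1 p.2.1 p.2.2

variable {F G : ℝ × ℝ × ℝ → ℝ} {ζ : ℝ → ℝ → ℝ → ℝ}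

lemma pd_contDiff (hF : ContDiff ℝ (⊤ : ℕ∞) F) (v) : ContDiff ℝ (⊤ : ℕ∞) (pd v F) :=
  (hF.fderiv_right (by simp)).clm_apply contDiff_const

lemma pd_continuous (hF : ContDiff ℝ (⊤ : ℕ∞) F) (v) : Continuous (pd v F) :=
  (pd_contDiff hF v).continuous

lemma hasDerivAt_slice1 (hF : ContDiff ℝ (⊤ : ℕ∞) F) (x y t : ℝ) :
    HasDerivAt (fun s => F (s, y, t)) (pd e1 F (x,y,t)) x := by
  have h1 : HasDerivAt (fun s : ℝ => ((s, y, t) : ℝ×ℝ×ℝ)) e1 x :=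
    (hasDerivAt_id x).prodMk ((hasDerivAt_const x y).prodMk (hasDerivAt_const x t))
  exact ((hF.differentiable (by simp) (x,y,t)).hasFDerivAt.comp_hasDerivAt x h1)

lemma hasDerivAt_slice2 (hF : ContDiff ℝ (⊤ : ℕ∞) F) (x y t : ℝ) :
    HasDerivAt (fun r => F (x, r, t)) (pd e2 F (x,y,t)) y := by
  have h1 : HasDerivAt (fun r : ℝ => ((x, r, t) : ℝ×ℝ×ℝ)) e2 y :=
    (hasDerivAt_const y x).prodMk ((hasDerivAt_id y).prodMk (hasDerivAt_const y t))
  exact ((hF.differentiable (by simp) (x,y,t)).hasFDerivAt.comp_hasDerivAt y h1)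

lemma hasDerivAt_slice3 (hF : ContDiff ℝ (⊤ : ℕ∞) F) (x y t : ℝ) :
    HasDerivAt (fun τ => F (x, y, τ)) (pd e3 F (x,y,t)) t := by
  have h1 : HasDerivAt (fun τ : ℝ => ((x, y, τ) : ℝ×ℝ×ℝ)) e3 t :=
    (hasDerivAt_const t x).prodMk ((hasDerivAt_const t y).prodMk (hasDerivAt_id t))
  exact ((hF.differentiable (by simp) (x,y,t)).hasFDerivAt.comp_hasDerivAt t h1)

lemma slice1_deriv (hG : ContDiff ℝ (⊤ : ℕ∞) G) (y t : ℝ) :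
    deriv (fun s => G (s,y,t)) = fun x => pd e1 G (x,y,t) :=
  funext fun x => (hasDerivAt_slice1 hG x y t).deriv

lemma slice2_deriv (hG : ContDiff ℝ (⊤ : ℕ∞) G) (x t : ℝ) :
    deriv (fun r => G (x,r,t)) = fun y => pd e2 G (x,y,t) :=
  funext fun y => (hasDerivAt_slice2 hG x y t).deriv

lemma pT_eq (hζ : Smooth3 ζ) (x y t : ℝ) : pT ζ x y t = pd e3 (unc ζ) (x,y,t) :=
  (hasDerivAt_slice3 hζ x y t).deriv

lemma pX_eq (hζ : Smooth3 ζ) (x y t : ℝ) : pX ζ x y t = pd e1 (unc ζ) (x,y,t) :=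
  (hasDerivAt_slice1 hζ x y t).deriv

lemma pY_eq (hζ : Smooth3 ζ) (x y t : ℝ) : pY ζ x y t = pd e2 (unc ζ) (x,y,t) :=
  (hasDerivAt_slice2 hζ x y t).deriv

lemma pX3_eq (hζ : Smooth3 ζ) (x y t : ℝ) :
    pX3 ζ x y t = pd e1 (pd e1 (pd e1 (unc ζ))) (x,y,t) := by
  have hζ' : ContDiff ℝ (⊤ : ℕ∞) (unc ζ) := hζ
  show iteratedDeriv 3 (fun s => unc ζ (s,y,t)) x = _
  rw [show (3:ℕ) = 2+1 from rfl, iteratedDeriv_succ', slice1_deriv hζ',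
    show (2:ℕ) = 1+1 from rfl, iteratedDeriv_succ', slice1_deriv (pd_contDiff hζ' e1),
    iteratedDeriv_one, slice1_deriv (pd_contDiff (pd_contDiff hζ' e1) e1)]

lemma pXYY_eq (hζ : Smooth3 ζ) (x y t : ℝ) :
    pXYY ζ x y t = pd e1 (pd e2 (pd e2 (unc ζ))) (x,y,t) := by
  have hζ' : ContDiff ℝ (⊤ : ℕ∞) (unc ζ) := hζ
  have hin : ∀ s : ℝ, iteratedDeriv 2 (fun r => ζ s r t) y
      = pd e2 (pd e2 (unc ζ)) (s,y,t) := by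
    intro s
    show iteratedDeriv 2 (fun r => unc ζ (s,r,t)) y = _
    rw [show (2:ℕ) = 1+1 from rfl, iteratedDeriv_succ', slice2_deriv hζ',
      iteratedDeriv_one, slice2_deriv (pd_contDiff hζ' e2)]
  show deriv (fun s => iteratedDeriv 2 (fun r => ζ s r t) y) x = _
  rw [funext hin]
  exact (hasDerivAt_slice1 (pd_contDiff (pd_contDiff hζ' e2) e2) x y t).deriv

lemma pd_comm (hF : ContDiff ℝ (⊤ : ℕ∞) F) (v w : ℝ×ℝ×ℝ) : pd v (pd w F) = pd w (pd v F) := by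
  funext p
  have hd : DifferentiableAt ℝ (fderiv ℝ F) p :=
    ((hF.fderiv_right (m := (⊤ : ℕ∞)) (by simp)).differentiable (by simp)) p
  have key : ∀ u₁ u₂ : ℝ×ℝ×ℝ, pd u₁ (pd u₂ F) p = fderiv ℝ (fderiv ℝ F) p u₁ u₂ := by
    intro u₁ u₂
    show fderiv ℝ (fun q => fderiv ℝ F q u₂) p u₁ = _
    rw [fderiv_clm_apply hd (differentiableAt_const u₂)]
    simp
  rw [key, key]
  exact (hF.contDiffAt.of_le (by exact WithTop.coe_le_coe.mpr le_top) |>.isSymmSndFDerivAt (n := 2) (by simp)) v w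

lemma pd_sq (hF : ContDiff ℝ (⊤ : ℕ∞) F) (v) :
    pd v (fun p => (F p)^2) = fun p => 2 * F p * pd v F p := by
  funext p
  have hd := (hF.differentiable (by simp) p).hasFDerivAt
  have h : HasFDerivAt (fun q => F q * F q)
      (F p • fderiv ℝ F p + F p • fderiv ℝ F p) p := hd.mul hd
  show fderiv ℝ (fun q => (F q)^2) p v = _
  simp only [pow_two]
  rw [h.fderiv]
  simp [pd]
  ring


variable {X : Type}


/-- generic differentiation under the integral sign -/
lemma hasDerivAt_int {X : Type} [MeasurableSpace X] {μ : Measure X}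
    (f f' : X → ℝ → ℝ) (t K : ℝ)
    (hmeas : ∀ s : ℝ, AEStronglyMeasurable (fun x => f x s) μ)
    (h'meas : AEStronglyMeasurable (fun x => f' x t) μ)
    (hK : Integrable (fun _ : X => K) μ)
    (hd : ∀ᵐ x ∂μ, ∀ s ∈ Metric.ball t 1, HasDerivAt (f x) (f' x s) s)
    (hb : ∀ᵐ x ∂μ, ∀ s ∈ Metric.ball t 1, |f' x s| ≤ K)
    (hint : Integrable (fun x => f x t) μ) :
    HasDerivAt (fun s => ∫ x, f x s ∂μ) (∫ x, f' x t ∂μ) t := by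
  have H := hasDerivAt_integral_of_dominated_loc_of_lip
      (F := fun s x => f x s) (F' := fun x => f' x t) (bound := fun _ => K)
      (μ := μ) (x₀ := t) (Metric.ball_mem_nhds t one_pos)
      (Filter.Eventually.of_forall hmeas) hint h'meas ?_ hK ?_
  · exact H.2
  · filter_upwards [hd, hb] with x hdx hbx
    refine Convex.lipschitzOnWith_of_nnnorm_hasDerivWithin_le (f' := fun s => f' x s)
      (convex_ball t 1) (fun s hs => (hdx s hs).hasDerivWithinAt) (fun s hs => ?_)
    have : |f' x s| ≤ K := hbx s hs
    calc ‖f' x s‖₊ = Real.nnabs (f' x s) := by rfl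
      _ ≤ Real.nnabs K := by
          have h2 : |f' x s| ≤ |K| := this.trans (le_abs_self K)
          exact_mod_cast h2
  · filter_upwards [hd] with x hdx using hdx t (Metric.mem_ball_self one_pos)


lemma vol_Ioo_prod_ne_top (L L' : ℝ) : volume (Ioo (0:ℝ) L ×ˢ Ioo (0:ℝ) L') ≠ ⊤ := by
  rw [Measure.volume_eq_prod, Measure.prod_prod, Real.volume_Ioo, Real.volume_Ioo]
  exact ENNReal.mul_ne_top ENNReal.ofReal_ne_top ENNReal.ofReal_ne_top

instance restrict_Ioo_finite (a b : ℝ) : IsFiniteMeasure (volume.restrict (Ioo a b)) :=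
  ⟨by rw [Measure.restrict_apply_univ, Real.volume_Ioo]; exact ENNReal.ofReal_lt_top⟩

instance restrict_Ioo_prod_finite (L L' : ℝ) :
    IsFiniteMeasure ((volume : Measure (ℝ×ℝ)).restrict (Ioo (0:ℝ) L ×ˢ Ioo (0:ℝ) L')) :=
  ⟨by rw [Measure.restrict_apply_univ]; exact (vol_Ioo_prod_ne_top L L').lt_top⟩

lemma ii_Ioo {L : ℝ} (hL : 0 ≤ L) (g : ℝ → ℝ) :
    ∫ x in (0:ℝ)..L, g x = ∫ x in Ioo (0:ℝ) L, g x := by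
  rw [integral_of_le hL, integral_Ioc_eq_integral_Ioo]

lemma integral_Q_eq {L : ℝ} {f : ℝ×ℝ → ℝ} (hf : IntegrableOn f (Ioo (0:ℝ) L ×ˢ Ioo (0:ℝ) L)) :
    ∫ p in Ioo (0:ℝ) L ×ˢ Ioo (0:ℝ) L, f p
      = ∫ x in Ioo (0:ℝ) L, ∫ y in Ioo (0:ℝ) L, f (x, y) := by
  rw [Measure.volume_eq_prod] at hf ⊢
  exact setIntegral_prod f hf

def QS (L : ℝ) : Set (ℝ×ℝ) := Ioo 0 L ×ˢ Ioo 0 L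
def TS (L : ℝ) : Set ((ℝ×ℝ)×ℝ) := QS L ×ˢ Ioo (0:ℝ) 1

lemma measurableSet_QS (L : ℝ) : MeasurableSet (QS L) :=
  measurableSet_Ioo.prod measurableSet_Ioo
lemma measurableSet_TS (L : ℝ) : MeasurableSet (TS L) :=
  (measurableSet_QS L).prod measurableSet_Ioo

lemma vol_QS_ne_top (L : ℝ) : volume (QS L) ≠ ⊤ := by
  rw [QS, Measure.volume_eq_prod, Measure.prod_prod, Real.volume_Ioo]
  exact ENNReal.mul_ne_top ENNReal.ofReal_ne_top ENNReal.ofReal_ne_top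

lemma vol_TS_ne_top (L : ℝ) : volume (TS L) ≠ ⊤ := by
  rw [TS, Measure.volume_eq_prod, Measure.prod_prod, Real.volume_Ioo]
  exact ENNReal.mul_ne_top (vol_QS_ne_top L) ENNReal.ofReal_ne_top

instance (L : ℝ) : IsFiniteMeasure ((volume : Measure (ℝ×ℝ)).restrict (QS L)) :=
  ⟨by rw [Measure.restrict_apply_univ]; exact (vol_QS_ne_top L).lt_top⟩
instance (L : ℝ) : IsFiniteMeasure ((volume : Measure ((ℝ×ℝ)×ℝ)).restrict (TS L)) :=
  ⟨by rw [Measure.restrict_apply_univ]; exact (vol_TS_ne_top L).lt_top⟩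

lemma QS_subset_compact (L : ℝ) : QS L ⊆ Icc (0:ℝ) L ×ˢ Icc (0:ℝ) L :=
  Set.prod_mono Ioo_subset_Icc_self Ioo_subset_Icc_self
lemma isCompact_KQ (L : ℝ) : IsCompact (Icc (0:ℝ) L ×ˢ Icc (0:ℝ) L) :=
  isCompact_Icc.prod isCompact_Icc
lemma TS_subset_compact (L : ℝ) :
    TS L ⊆ (Icc (0:ℝ) L ×ˢ Icc (0:ℝ) L) ×ˢ Icc (0:ℝ) 1 :=
  Set.prod_mono (QS_subset_compact L) Ioo_subset_Icc_self
lemma isCompact_KT (L : ℝ) : IsCompact ((Icc (0:ℝ) L ×ˢ Icc (0:ℝ) L) ×ˢ Icc (0:ℝ) 1) :=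
  (isCompact_KQ L).prod isCompact_Icc

/-- bound on a set contained in a compact set -/
lemma bound_on {X : Type*} [TopologicalSpace X] {k s : Set X} (hk : IsCompact k)
    (hsk : s ⊆ k) {g : X → ℝ} (hg : Continuous g) : ∃ C : ℝ, ∀ p ∈ s, ‖g p‖ ≤ C := by
  obtain ⟨C, hC⟩ := hk.exists_bound_of_continuousOn hg.continuousOn
  exact ⟨C, fun p hp => hC p (hsk hp)⟩

lemma bdd_integrableOn {X : Type*} [MeasureSpace X] {s : Set X} (hs : MeasurableSet s)
    (hfin : volume s ≠ ⊤) {f : X → ℝ} (hm : AEStronglyMeasurable f volume) {C : ℝ}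
    (hb : ∀ p ∈ s, ‖f p‖ ≤ C) : IntegrableOn f s :=
  Measure.integrableOn_of_bounded hfin hm ((ae_restrict_iff' hs).2 (.of_forall hb))

lemma intQ_cont {L : ℝ} {g : ℝ×ℝ → ℝ} (hg : Continuous g) : IntegrableOn g (QS L) := by
  obtain ⟨C, hC⟩ := bound_on (isCompact_KQ L) (QS_subset_compact L) hg
  exact bdd_integrableOn (measurableSet_QS L) (vol_QS_ne_top L) hg.aestronglyMeasurable hC

lemma intQ_mul {L : ℝ} {a2 : ℝ×ℝ → ℝ} (hm : Measurable a2) {M : ℝ}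
    (hM : ∀ p, |a2 p| ≤ M) {g : ℝ×ℝ → ℝ} (hg : Continuous g) :
    IntegrableOn (fun p => a2 p * g p) (QS L) := by
  obtain ⟨C, hC⟩ := bound_on (isCompact_KQ L) (QS_subset_compact L) hg
  refine bdd_integrableOn (measurableSet_QS L) (vol_QS_ne_top L)
    (hm.aestronglyMeasurable.mul hg.aestronglyMeasurable) (C := M * C) (fun p hp => ?_)
  rw [norm_mul]
  exact mul_le_mul (by rw [Real.norm_eq_abs]; exact hM p) (hC p hp) (norm_nonneg _)
    ((abs_nonneg _).trans (hM p))

lemma intT_mul {L : ℝ} {a2 : ℝ×ℝ → ℝ} (hm : Measurable a2) {M : ℝ}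
    (hM : ∀ p, |a2 p| ≤ M) {g : (ℝ×ℝ)×ℝ → ℝ} (hg : Continuous g) :
    IntegrableOn (fun q => a2 q.1 * g q) (TS L) := by
  obtain ⟨C, hC⟩ := bound_on (isCompact_KT L) (TS_subset_compact L) hg
  refine bdd_integrableOn (measurableSet_TS L) (vol_TS_ne_top L)
    ((hm.comp measurable_fst).aestronglyMeasurable.mul hg.aestronglyMeasurable)
    (C := M * C) (fun q hq => ?_)
  rw [norm_mul]
  exact mul_le_mul (by rw [Real.norm_eq_abs]; exact hM q.1) (hC q hq) (norm_nonneg _)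
    ((abs_nonneg _).trans (hM q.1))


variable {L h : ℝ} {a : ℝ → ℝ → ℝ} {ζ : ℝ → ℝ → ℝ → ℝ}

lemma cont3 (hζ : Smooth3 ζ) {Y : Type*} [TopologicalSpace Y] {u v w : Y → ℝ}
    (hu : Continuous u) (hv : Continuous v) (hw : Continuous w) :
    Continuous (fun q : Y => unc ζ (u q, v q, w q)) :=
  (hζ : ContDiff ℝ (⊤ : ℕ∞) (unc ζ)).continuous.comp (by fun_prop)

lemma contpd3 (hζ : Smooth3 ζ) (e : ℝ×ℝ×ℝ) {Y : Type*} [TopologicalSpace Y] {u v w : Y → ℝ}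
    (hu : Continuous u) (hv : Continuous v) (hw : Continuous w) :
    Continuous (fun q : Y => pd e (unc ζ) (u q, v q, w q)) :=
  (pd_continuous (hζ : ContDiff ℝ (⊤ : ℕ∞) (unc ζ)) e).comp (by fun_prop)

lemma ball_sub (t : ℝ) : Metric.ball t 1 ⊆ Icc (t-1) (t+1) := by
  rw [Real.ball_eq_Ioo]; exact Ioo_subset_Icc_self

lemma hasDerivAt_sq_int (hζ : Smooth3 ζ) (L t : ℝ) :
    HasDerivAt (fun s => ∫ p in QS L, (unc ζ (p.1, p.2, s))^2)
      (∫ p in QS L, 2 * unc ζ (p.1, p.2, t) * pd e3 (unc ζ) (p.1, p.2, t)) t := by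
  have hcont : Continuous (fun q : (ℝ×ℝ)×ℝ =>
      2 * unc ζ (q.1.1, q.1.2, q.2) * pd e3 (unc ζ) (q.1.1, q.1.2, q.2)) :=
    (continuous_const.mul (cont3 hζ (by fun_prop) (by fun_prop) (by fun_prop))).mul
      (contpd3 hζ e3 (by fun_prop) (by fun_prop) (by fun_prop))
  obtain ⟨K, hK⟩ := bound_on ((isCompact_KQ L).prod (isCompact_Icc (a := t-1) (b := t+1)))
    (Set.prod_mono (QS_subset_compact L) (ball_sub t)) hcont
  refine hasDerivAt_int (μ := volume.restrict (QS L))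
    (fun p s => (unc ζ (p.1,p.2,s))^2)
    (fun p s => 2 * unc ζ (p.1,p.2,s) * pd e3 (unc ζ) (p.1,p.2,s)) t K
    (fun s => ((cont3 hζ continuous_fst continuous_snd continuous_const).pow 2).aestronglyMeasurable)
    ((continuous_const.mul (cont3 hζ continuous_fst continuous_snd continuous_const)).mul
      (contpd3 hζ e3 continuous_fst continuous_snd continuous_const)).aestronglyMeasurable
    (integrable_const K) ?_ ?_
    (intQ_cont ((cont3 hζ continuous_fst continuous_snd continuous_const).pow 2))
  · refine Filter.Eventually.of_forall (fun p s _ => ?_)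
    have := (hasDerivAt_slice3 (show ContDiff ℝ (⊤ : ℕ∞) (unc ζ) from hζ) p.1 p.2 s).fun_pow 2
    simpa using this
  · filter_upwards [ae_restrict_mem (measurableSet_QS L)] with p hp
    intro s hs
    simpa only [Real.norm_eq_abs] using hK (p, s) ⟨hp, hs⟩

lemma hasDerivAt_delay_int (hζ : Smooth3 ζ) (hma : Measurable fun p : ℝ×ℝ => a p.1 p.2)
    {M : ℝ} (hM : ∀ p : ℝ×ℝ, |a p.1 p.2| ≤ M) (hM0 : 0 ≤ M) (L h t : ℝ) :
    HasDerivAt (fun s => ∫ q in TS L, a q.1.1 q.1.2 * (unc ζ (q.1.1, q.1.2, s - q.2*h))^2)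
      (∫ q in TS L, a q.1.1 q.1.2 *
        (2 * unc ζ (q.1.1, q.1.2, t - q.2*h) * pd e3 (unc ζ) (q.1.1, q.1.2, t - q.2*h))) t := by
  have hcont : Continuous (fun q : ((ℝ×ℝ)×ℝ)×ℝ =>
      2 * unc ζ (q.1.1.1, q.1.1.2, q.2 - q.1.2*h)
        * pd e3 (unc ζ) (q.1.1.1, q.1.1.2, q.2 - q.1.2*h)) :=
    (continuous_const.mul (cont3 hζ (by fun_prop) (by fun_prop) (by fun_prop))).mul
      (contpd3 hζ e3 (by fun_prop) (by fun_prop) (by fun_prop))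
  obtain ⟨K, hK⟩ := bound_on ((isCompact_KT L).prod (isCompact_Icc (a := t-1) (b := t+1)))
    (Set.prod_mono (TS_subset_compact L) (ball_sub t)) hcont
  refine hasDerivAt_int (μ := volume.restrict (TS L))
    (fun q s => a q.1.1 q.1.2 * (unc ζ (q.1.1, q.1.2, s - q.2*h))^2)
    (fun q s => a q.1.1 q.1.2 *
      (2 * unc ζ (q.1.1, q.1.2, s - q.2*h) * pd e3 (unc ζ) (q.1.1, q.1.2, s - q.2*h))) t (M*K)
    (fun s => ((hma.comp measurable_fst).aestronglyMeasurable.mul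
      ((cont3 hζ (by fun_prop) (by fun_prop) (by fun_prop)).pow 2).aestronglyMeasurable))
    ((hma.comp measurable_fst).aestronglyMeasurable.mul
      ((continuous_const.mul (cont3 hζ (by fun_prop) (by fun_prop) (by fun_prop))).mul
        (contpd3 hζ e3 (by fun_prop) (by fun_prop) (by fun_prop))).aestronglyMeasurable)
    (integrable_const (M*K)) ?_ ?_ ?_
  · refine Filter.Eventually.of_forall (fun q s _ => ?_)
    have hin : HasDerivAt (fun s => unc ζ (q.1.1, q.1.2, s - q.2*h))
        (pd e3 (unc ζ) (q.1.1, q.1.2, s - q.2*h)) s := by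
      have h1 : HasDerivAt (fun s : ℝ => s - q.2*h) 1 s := (hasDerivAt_id s).sub_const _
      have := HasDerivAt.comp s
        (hasDerivAt_slice3 (show ContDiff ℝ (⊤ : ℕ∞) (unc ζ) from hζ) q.1.1 q.1.2 (s - q.2*h)) h1
      simpa [Function.comp_def] using this
    have := (hin.fun_pow 2).const_mul (a q.1.1 q.1.2)
    exact this.congr_deriv (by push_cast; ring)
  · filter_upwards [ae_restrict_mem (measurableSet_TS L)] with q hq
    intro s hs
    have h1 := hK (q, s) ⟨hq, hs⟩
    simp only [Real.norm_eq_abs] at h1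
    rw [abs_mul]
    exact mul_le_mul (hM q.1) h1 (abs_nonneg _) hM0
  · exact intT_mul hma hM ((cont3 hζ (by fun_prop) (by fun_prop) (by fun_prop)).pow 2)

lemma contG {G : ℝ×ℝ×ℝ → ℝ} (hG : ContDiff ℝ (⊤ : ℕ∞) G) {Y : Type*} [TopologicalSpace Y]
    {u v w : Y → ℝ} (hu : Continuous u) (hv : Continuous v) (hw : Continuous w) :
    Continuous (fun q : Y => G (u q, v q, w q)) :=
  hG.continuous.comp (by fun_prop)

lemma double_eq' {L : ℝ} (hL : 0 ≤ L) {f : ℝ → ℝ → ℝ}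
    (hf : IntegrableOn (fun p : ℝ×ℝ => f p.1 p.2) (QS L)) :
    (∫ x in (0:ℝ)..L, ∫ y in (0:ℝ)..L, f x y) = ∫ p in QS L, f p.1 p.2 := by
  rw [ii_Ioo hL]
  rw [show (fun x => ∫ y in (0:ℝ)..L, f x y) = fun x => ∫ y in Ioo (0:ℝ) L, f x y from
    funext fun x => ii_Ioo hL _]
  exact (integral_Q_eq hf).symm

lemma prod_restrict_eq (L : ℝ) :
    (volume : Measure ((ℝ×ℝ)×ℝ)).restrict (TS L)
      = (((volume : Measure (ℝ×ℝ)).restrict (QS L)).prod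
          ((volume : Measure ℝ).restrict (Ioo (0:ℝ) 1))) := by
  rw [TS, Measure.volume_eq_prod, ← Measure.prod_restrict]

lemma triple_int {L : ℝ} {g : (ℝ×ℝ)×ℝ → ℝ} (hf : IntegrableOn g (TS L)) :
    Integrable g
      (((volume : Measure (ℝ×ℝ)).restrict (QS L)).prod
        ((volume : Measure ℝ).restrict (Ioo (0:ℝ) 1))) := by
  rw [← prod_restrict_eq]; exact hf

lemma triple_split {L : ℝ} {g : (ℝ×ℝ)×ℝ → ℝ} (hf : IntegrableOn g (TS L)) :
    (∫ q in TS L, g q) = ∫ p in QS L, ∫ ρ in Ioo (0:ℝ) 1, g (p, ρ) := by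
  rw [prod_restrict_eq]
  exact MeasureTheory.integral_prod _ (triple_int hf)

lemma triple_eq' {L : ℝ} (hL : 0 ≤ L) {f : ℝ → ℝ → ℝ → ℝ}
    (hf : IntegrableOn (fun q : (ℝ×ℝ)×ℝ => f q.1.1 q.1.2 q.2) (TS L)) :
    (∫ x in (0:ℝ)..L, ∫ y in (0:ℝ)..L, ∫ ρ in (0:ℝ)..1, f x y ρ)
      = ∫ q in TS L, f q.1.1 q.1.2 q.2 := by
  rw [triple_split hf]
  rw [double_eq' hL (f := fun x y => ∫ ρ in (0:ℝ)..1, f x y ρ) ?_]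
  · apply setIntegral_congr_fun (measurableSet_QS L)
    intro p _
    exact ii_Ioo zero_le_one _
  · exact ((triple_int hf).integral_prod_left).congr
      (Filter.Eventually.of_forall fun p => (ii_Ioo zero_le_one _).symm)

lemma Q_restrict_eq (L : ℝ) :
    (volume : Measure (ℝ×ℝ)).restrict (QS L)
      = ((volume : Measure ℝ).restrict (Ioo (0:ℝ) L)).prod
          ((volume : Measure ℝ).restrict (Ioo (0:ℝ) L)) := by
  rw [QS, Measure.volume_eq_prod, ← Measure.prod_restrict]

lemma double_swap {L : ℝ} {f : ℝ×ℝ → ℝ} (hf : IntegrableOn f (QS L)) :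
    ∫ p in QS L, f p = ∫ y in Ioo (0:ℝ) L, ∫ x in Ioo (0:ℝ) L, f (x, y) := by
  rw [Q_restrict_eq]
  refine MeasureTheory.integral_prod_symm f ?_
  rw [← Q_restrict_eq]; exact hf

/-- rewrite of the energy as set integrals -/
lemma muE_eq {L h ξ : ℝ} {a : ℝ → ℝ → ℝ} {ζ : ℝ → ℝ → ℝ → ℝ}
    (hL : 0 ≤ L) (hζ : Smooth3 ζ) (hma : Measurable fun p : ℝ×ℝ => a p.1 p.2)
    {M : ℝ} (hM : ∀ p : ℝ×ℝ, |a p.1 p.2| ≤ M) :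
    muE L h ξ a ζ = fun t =>
      (1/2) * (∫ p in QS L, (unc ζ (p.1, p.2, t))^2)
      + (ξ/2) * (∫ q in TS L, a q.1.1 q.1.2 * (unc ζ (q.1.1, q.1.2, t - q.2*h))^2) := by
  funext t
  rw [muE]
  congr 1
  · congr 1
    exact double_eq' hL (f := fun x y => (ζ x y t)^2)
      (intQ_cont (by exact (cont3 hζ continuous_fst continuous_snd continuous_const).pow 2))
  · congr 1
    exact triple_eq' hL (f := fun x y ρ => a x y * (ζ x y (t - ρ*h))^2)
      (intT_mul hma hM (by
        exact (cont3 hζ (by fun_prop) (by fun_prop) (by fun_prop)).pow 2))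

/-- FTC in the delay variable -/
lemma delay_reduce {L h : ℝ} {a : ℝ → ℝ → ℝ} {ζ : ℝ → ℝ → ℝ → ℝ}
    (hζ : Smooth3 ζ) (hma : Measurable fun p : ℝ×ℝ => a p.1 p.2)
    {M : ℝ} (hM : ∀ p : ℝ×ℝ, |a p.1 p.2| ≤ M) (hh : h ≠ 0) (t : ℝ) :
    (∫ q in TS L, a q.1.1 q.1.2 *
        (2 * unc ζ (q.1.1, q.1.2, t - q.2*h) * pd e3 (unc ζ) (q.1.1, q.1.2, t - q.2*h)))
    = (1/h) * ((∫ p in QS L, a p.1 p.2 * (unc ζ (p.1,p.2,t))^2)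
        - (∫ p in QS L, a p.1 p.2 * (unc ζ (p.1,p.2,t-h))^2)) := by
  have hζ' : ContDiff ℝ (⊤ : ℕ∞) (unc ζ) := hζ
  rw [triple_split (intT_mul hma hM (by
    exact (continuous_const.mul (cont3 hζ (by fun_prop) (by fun_prop) (by fun_prop))).mul
      (contpd3 hζ e3 (by fun_prop) (by fun_prop) (by fun_prop))))]
  have key : ∀ p : ℝ×ℝ,
      (∫ ρ in Ioo (0:ℝ) 1, a p.1 p.2 *
        (2 * unc ζ (p.1, p.2, t - ρ*h) * pd e3 (unc ζ) (p.1, p.2, t - ρ*h)))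
      = (1/h) * (a p.1 p.2 * (unc ζ (p.1,p.2,t))^2 - a p.1 p.2 * (unc ζ (p.1,p.2,t-h))^2) := by
    intro p
    have hder : ∀ ρ : ℝ, HasDerivAt (fun ρ => (unc ζ (p.1, p.2, t - ρ*h))^2)
        ((-h) * (2 * unc ζ (p.1, p.2, t - ρ*h) * pd e3 (unc ζ) (p.1, p.2, t - ρ*h))) ρ := by
      intro ρ
      have h1 : HasDerivAt (fun ρ : ℝ => t - ρ*h) (-h) ρ := by
        simpa using ((hasDerivAt_id ρ).mul_const h).const_sub t
      have h2 := (HasDerivAt.comp ρ (hasDerivAt_slice3 hζ' p.1 p.2 (t - ρ*h)) h1).fun_pow 2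
      exact h2.congr_deriv (by simp only [Function.comp_apply, pow_one]; push_cast; ring)
    have hcont : Continuous (fun ρ : ℝ =>
        (-h) * (2 * unc ζ (p.1, p.2, t - ρ*h) * pd e3 (unc ζ) (p.1, p.2, t - ρ*h))) := by
      exact continuous_const.mul ((continuous_const.mul
        (cont3 hζ (by fun_prop) (by fun_prop) (by fun_prop))).mul
        (contpd3 hζ e3 (by fun_prop) (by fun_prop) (by fun_prop)))
    have hftc := integral_eq_sub_of_hasDerivAt (a := (0:ℝ)) (b := 1)
      (fun ρ _ => hder ρ) (hcont.intervalIntegrable 0 1)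
    rw [← ii_Ioo zero_le_one]
    have h3 : (∫ ρ in (0:ℝ)..1,
        (2 * unc ζ (p.1, p.2, t - ρ*h) * pd e3 (unc ζ) (p.1, p.2, t - ρ*h)))
        = (1/h) * ((unc ζ (p.1,p.2,t))^2 - (unc ζ (p.1,p.2,t-h))^2) := by
      have h4 : (∫ ρ in (0:ℝ)..1,
          (-h) * (2 * unc ζ (p.1, p.2, t - ρ*h) * pd e3 (unc ζ) (p.1, p.2, t - ρ*h)))
          = (unc ζ (p.1,p.2,t-1*h))^2 - (unc ζ (p.1,p.2,t-0*h))^2 := hftc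
      rw [intervalIntegral.integral_const_mul] at h4
      have h5 : (unc ζ (p.1,p.2,t-1*h))^2 - (unc ζ (p.1,p.2,t-0*h))^2
          = (unc ζ (p.1,p.2,t-h))^2 - (unc ζ (p.1,p.2,t))^2 := by norm_num
      rw [h5] at h4
      field_simp at h4 ⊢
      linarith [h4]
    calc (∫ ρ in (0:ℝ)..1, a p.1 p.2 *
            (2 * unc ζ (p.1, p.2, t - ρ*h) * pd e3 (unc ζ) (p.1, p.2, t - ρ*h)))
        = a p.1 p.2 * (∫ ρ in (0:ℝ)..1,
            (2 * unc ζ (p.1, p.2, t - ρ*h) * pd e3 (unc ζ) (p.1, p.2, t - ρ*h))) :=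
          intervalIntegral.integral_const_mul _ _
      _ = (1/h) * (a p.1 p.2 * (unc ζ (p.1,p.2,t))^2 - a p.1 p.2 * (unc ζ (p.1,p.2,t-h))^2) := by
          rw [h3]; ring
  rw [setIntegral_congr_fun (measurableSet_QS L) (g := fun p =>
    (1/h) * (a p.1 p.2 * (unc ζ (p.1,p.2,t))^2 - a p.1 p.2 * (unc ζ (p.1,p.2,t-h))^2))
    (fun p _ => key p)]
  rw [MeasureTheory.integral_const_mul]
  congr 1
  exact MeasureTheory.integral_sub
    (intQ_mul hma hM (by exact (cont3 hζ continuous_fst continuous_snd continuous_const).pow 2))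
    (intQ_mul hma hM (by exact (cont3 hζ continuous_fst continuous_snd continuous_const).pow 2))

lemma ibp_x {L : ℝ} {ζ : ℝ → ℝ → ℝ → ℝ} (hζ : Smooth3 ζ) {t : ℝ}
    (bc : ∀ y ∈ Ioo (0:ℝ) L, unc ζ (0,y,t) = 0 ∧ unc ζ (L,y,t) = 0
      ∧ pd e1 (unc ζ) (L,y,t) = 0) :
    ∫ p in QS L, unc ζ (p.1,p.2,t) * pd e1 (pd e1 (pd e1 (unc ζ))) (p.1,p.2,t)
      = (1/2) * ∫ y in Ioo (0:ℝ) L, (pd e1 (unc ζ) (0,y,t))^2 := by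
  have hζ' : ContDiff ℝ (⊤ : ℕ∞) (unc ζ) := hζ
  have c1 : ContDiff ℝ (⊤ : ℕ∞) (pd e1 (unc ζ)) := pd_contDiff hζ' e1
  have c2 : ContDiff ℝ (⊤ : ℕ∞) (pd e1 (pd e1 (unc ζ))) := pd_contDiff c1 e1
  have c3 : ContDiff ℝ (⊤ : ℕ∞) (pd e1 (pd e1 (pd e1 (unc ζ)))) := pd_contDiff c2 e1
  rw [double_swap (intQ_cont (by
    exact (cont3 hζ continuous_fst continuous_snd continuous_const).mul
      (contG c3 continuous_fst continuous_snd continuous_const)))]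
  rw [setIntegral_congr_fun measurableSet_Ioo
    (g := fun y => (1/2) * (pd e1 (unc ζ) (0,y,t))^2) ?_]
  · exact MeasureTheory.integral_const_mul _ _
  intro y hy
  obtain ⟨b0, bL, b1⟩ := bc y hy
  dsimp only
  rw [← ii_Ioo (le_of_lt (hy.1.trans hy.2))]
  have hu : ∀ x ∈ uIcc (0:ℝ) L, HasDerivAt (fun x => unc ζ (x,y,t))
      (pd e1 (unc ζ) (x,y,t)) x := fun x _ => hasDerivAt_slice1 hζ' x y t
  have hv : ∀ x ∈ uIcc (0:ℝ) L, HasDerivAt (fun x => pd e1 (pd e1 (unc ζ)) (x,y,t))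
      (pd e1 (pd e1 (pd e1 (unc ζ))) (x,y,t)) x := fun x _ => hasDerivAt_slice1 c2 x y t
  have ibp := integral_mul_deriv_eq_deriv_mul hu hv
    ((contG c1 continuous_id continuous_const continuous_const).intervalIntegrable 0 L)
    ((contG c3 continuous_id continuous_const continuous_const).intervalIntegrable 0 L)
  have ihalf : (∫ x in (0:ℝ)..L, pd e1 (unc ζ) (x,y,t) * pd e1 (pd e1 (unc ζ)) (x,y,t))
      = (pd e1 (unc ζ) (L,y,t))^2/2 - (pd e1 (unc ζ) (0,y,t))^2/2 := by
    refine integral_eq_sub_of_hasDerivAt (f := fun x => (pd e1 (unc ζ) (x,y,t))^2/2)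
      (fun x _ => ?_)
      (((contG c1 continuous_id continuous_const continuous_const).mul
        (contG c2 continuous_id continuous_const continuous_const)).intervalIntegrable 0 L)
    have := ((hasDerivAt_slice1 c1 x y t).fun_pow 2).div_const 2
    exact this.congr_deriv (by push_cast; ring)
  rw [ibp, ihalf, b0, bL, b1]
  ring

lemma ibp_y {L : ℝ} {ζ : ℝ → ℝ → ℝ → ℝ} (hζ : Smooth3 ζ) {t : ℝ}
    (bcx : ∀ y ∈ Ioo (0:ℝ) L, pd e2 (unc ζ) (L,y,t) = 0)
    (bcy : ∀ x ∈ Ioo (0:ℝ) L, unc ζ (x,0,t) = 0 ∧ unc ζ (x,L,t) = 0) :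
    ∫ p in QS L, unc ζ (p.1,p.2,t) * pd e1 (pd e2 (pd e2 (unc ζ))) (p.1,p.2,t)
      = (1/2) * ∫ y in Ioo (0:ℝ) L, (pd e2 (unc ζ) (0,y,t))^2 := by
  have hζ' : ContDiff ℝ (⊤ : ℕ∞) (unc ζ) := hζ
  have c2 : ContDiff ℝ (⊤ : ℕ∞) (pd e2 (unc ζ)) := pd_contDiff hζ' e2
  have c12 : ContDiff ℝ (⊤ : ℕ∞) (pd e1 (pd e2 (unc ζ))) := pd_contDiff c2 e1
  have c22 : ContDiff ℝ (⊤ : ℕ∞) (pd e2 (pd e2 (unc ζ))) := pd_contDiff c2 e2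
  have c122 : ContDiff ℝ (⊤ : ℕ∞) (pd e1 (pd e2 (pd e2 (unc ζ)))) := pd_contDiff c22 e1
  -- H = (pd e2 unc)^2 ; pd e1 H = 2 * pd e2 * pd e1 pd e2
  have hH : ContDiff ℝ (⊤ : ℕ∞) (fun p => (pd e2 (unc ζ) p)^2) := by
    have := c2.mul c2
    simpa [pow_two] using this
  have cH1 : ContDiff ℝ (⊤ : ℕ∞) (pd e1 (fun p => (pd e2 (unc ζ) p)^2)) := pd_contDiff hH e1
  -- step 1: iterated integral, x outer
  rw [show (∫ p in QS L, unc ζ (p.1,p.2,t) * pd e1 (pd e2 (pd e2 (unc ζ))) (p.1,p.2,t))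
      = ∫ x in Ioo (0:ℝ) L, ∫ y in Ioo (0:ℝ) L,
          unc ζ (x,y,t) * pd e1 (pd e2 (pd e2 (unc ζ))) (x,y,t) from
    integral_Q_eq (intQ_cont (by
      exact (cont3 hζ continuous_fst continuous_snd continuous_const).mul
        (contG c122 continuous_fst continuous_snd continuous_const)))]
  -- step 2: inner IBP in y
  have step2 : ∀ x ∈ Ioo (0:ℝ) L,
      (∫ y in Ioo (0:ℝ) L, unc ζ (x,y,t) * pd e1 (pd e2 (pd e2 (unc ζ))) (x,y,t))
      = ∫ y in Ioo (0:ℝ) L,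
          (-(1/2)) * pd e1 (fun p => (pd e2 (unc ζ) p)^2) (x,y,t) := by
    intro x hx
    obtain ⟨b0, bL⟩ := bcy x hx
    have hLpos : (0:ℝ) ≤ L := le_of_lt (hx.1.trans hx.2)
    rw [← ii_Ioo hLpos, ← ii_Ioo hLpos]
    have hcomm : pd e1 (pd e2 (pd e2 (unc ζ))) = pd e2 (pd e1 (pd e2 (unc ζ))) :=
      pd_comm c2 e1 e2
    have hu : ∀ y ∈ uIcc (0:ℝ) L, HasDerivAt (fun y => unc ζ (x,y,t))
        (pd e2 (unc ζ) (x,y,t)) y := fun y _ => hasDerivAt_slice2 hζ' x y t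
    have hv : ∀ y ∈ uIcc (0:ℝ) L, HasDerivAt (fun y => pd e1 (pd e2 (unc ζ)) (x,y,t))
        (pd e1 (pd e2 (pd e2 (unc ζ))) (x,y,t)) y := by
      intro y _
      rw [hcomm]
      exact hasDerivAt_slice2 c12 x y t
    have ibp := integral_mul_deriv_eq_deriv_mul hu hv
      ((contG c2 continuous_const continuous_id continuous_const).intervalIntegrable 0 L)
      ((contG c122 continuous_const continuous_id continuous_const).intervalIntegrable 0 L)
    rw [ibp, b0, bL]
    rw [show (∫ y in (0:ℝ)..L, pd e2 (unc ζ) (x,y,t) * pd e1 (pd e2 (unc ζ)) (x,y,t))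
        = ∫ y in (0:ℝ)..L, (1/2) * pd e1 (fun p => (pd e2 (unc ζ) p)^2) (x,y,t) from by
      refine intervalIntegral.integral_congr (fun y _ => ?_)
      rw [pd_sq c2 e1]
      ring]
    rw [intervalIntegral.integral_const_mul, intervalIntegral.integral_const_mul]
    ring
  rw [setIntegral_congr_fun measurableSet_Ioo step2]
  -- step 3: back to set integral, swap, FTC in x
  have contInt1 : Continuous (fun q : ℝ×ℝ =>
      (-(1/2) : ℝ) * pd e1 (fun p => (pd e2 (unc ζ) p)^2) (q.1, q.2, t)) :=
    continuous_const.mul (contG cH1 continuous_fst continuous_snd continuous_const)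
  rw [show (∫ x in Ioo (0:ℝ) L, ∫ y in Ioo (0:ℝ) L,
      (-(1/2)) * pd e1 (fun p => (pd e2 (unc ζ) p)^2) (x,y,t))
      = ∫ p in QS L, (-(1/2)) * pd e1 (fun p => (pd e2 (unc ζ) p)^2) (p.1,p.2,t) from
    (integral_Q_eq (f := fun q : ℝ×ℝ =>
      (-(1/2) : ℝ) * pd e1 (fun p => (pd e2 (unc ζ) p)^2) (q.1, q.2, t))
      (intQ_cont contInt1)).symm]
  rw [double_swap (intQ_cont contInt1)]
  rw [setIntegral_congr_fun measurableSet_Ioo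
    (g := fun y => (1/2) * (pd e2 (unc ζ) (0,y,t))^2) ?_]
  · exact MeasureTheory.integral_const_mul _ _
  intro y hy
  dsimp only
  have hLpos : (0:ℝ) ≤ L := le_of_lt (hy.1.trans hy.2)
  have hftc : (∫ x in (0:ℝ)..L, pd e1 (fun p => (pd e2 (unc ζ) p)^2) (x,y,t))
      = (pd e2 (unc ζ) (L,y,t))^2 - (pd e2 (unc ζ) (0,y,t))^2 := by
    refine integral_eq_sub_of_hasDerivAt (f := fun x => (pd e2 (unc ζ) (x,y,t))^2)
      (fun x _ => ?_)
      ((contG cH1 continuous_id continuous_const continuous_const).intervalIntegrable 0 L)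
    exact hasDerivAt_slice1 hH x y t
  rw [← ii_Ioo hLpos, intervalIntegral.integral_const_mul, hftc, bcx y hy]
  ring

section MainSec
variable {L α' γ' h μ₁ μ₂ ξ : ℝ} {a : ℝ → ℝ → ℝ} {ζ : ℝ → ℝ → ℝ → ℝ}

/-- derivative of the energy, valid for all times -/
lemma muE_hasDeriv (hL : 0 ≤ L) (hh : h ≠ 0) (hζ : Smooth3 ζ)
    (hma : Measurable fun p : ℝ×ℝ => a p.1 p.2)
    {M : ℝ} (hM : ∀ p : ℝ×ℝ, |a p.1 p.2| ≤ M) (hM0 : 0 ≤ M) (t : ℝ) :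
    HasDerivAt (muE L h ξ a ζ)
      ((1/2) * (∫ p in QS L, 2 * unc ζ (p.1,p.2,t) * pd e3 (unc ζ) (p.1,p.2,t))
        + (ξ/2) * ((1/h) * ((∫ p in QS L, a p.1 p.2 * (unc ζ (p.1,p.2,t))^2)
            - (∫ p in QS L, a p.1 p.2 * (unc ζ (p.1,p.2,t-h))^2)))) t := by
  rw [muE_eq hL hζ hma hM]
  refine HasDerivAt.add ((hasDerivAt_sq_int hζ L t).const_mul (1/2)) ?_
  have h2 := (hasDerivAt_delay_int hζ hma hM hM0 L h t).const_mul (ξ/2)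
  rwa [delay_reduce hζ hma hM hh t] at h2

/-- the derivative identity for positive times -/
lemma muE_deriv_eq (hL : 0 < L) (hh : 0 < h) (hζ : Smooth3 ζ) (hbc : ZKbc L ζ)
    (hpde : ∀ x ∈ Ioo (0:ℝ) L, ∀ y ∈ Ioo (0:ℝ) L, ∀ t > (0:ℝ),
      pT ζ x y t + α' * pX3 ζ x y t + γ' * pXYY ζ x y t
        + a x y * (μ₁ * ζ x y t + μ₂ * ζ x y (t - h)) = 0)
    (hma : Measurable fun p : ℝ×ℝ => a p.1 p.2)
    {M : ℝ} (hM : ∀ p : ℝ×ℝ, |a p.1 p.2| ≤ M)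
    {t : ℝ} (ht : 0 < t) :
    (1/2) * (∫ p in QS L, 2 * unc ζ (p.1,p.2,t) * pd e3 (unc ζ) (p.1,p.2,t))
      = -(α'/2) * (∫ y in Ioo (0:ℝ) L, (pd e1 (unc ζ) (0,y,t))^2)
        - (γ'/2) * (∫ y in Ioo (0:ℝ) L, (pd e2 (unc ζ) (0,y,t))^2)
        - μ₁ * (∫ p in QS L, a p.1 p.2 * (unc ζ (p.1,p.2,t))^2)
        - μ₂ * (∫ p in QS L, a p.1 p.2 * (unc ζ (p.1,p.2,t) * unc ζ (p.1,p.2,t-h))) := by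
  have hζ' : ContDiff ℝ (⊤ : ℕ∞) (unc ζ) := hζ
  have cX3 : ContDiff ℝ (⊤ : ℕ∞) (pd e1 (pd e1 (pd e1 (unc ζ)))) :=
    pd_contDiff (pd_contDiff (pd_contDiff hζ' e1) e1) e1
  have cXYY : ContDiff ℝ (⊤ : ℕ∞) (pd e1 (pd e2 (pd e2 (unc ζ)))) :=
    pd_contDiff (pd_contDiff (pd_contDiff hζ' e2) e2) e1
  have cZ : Continuous (fun p : ℝ×ℝ => unc ζ (p.1, p.2, t)) :=
    cont3 hζ continuous_fst continuous_snd continuous_const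
  have cZh : Continuous (fun p : ℝ×ℝ => unc ζ (p.1, p.2, t - h)) :=
    cont3 hζ continuous_fst continuous_snd continuous_const
  have i1 : IntegrableOn (fun p : ℝ×ℝ =>
      (-2*α') * (unc ζ (p.1,p.2,t) * pd e1 (pd e1 (pd e1 (unc ζ))) (p.1,p.2,t))) (QS L) :=
    intQ_cont (continuous_const.mul (cZ.mul
      (contG cX3 continuous_fst continuous_snd continuous_const)))
  have i2 : IntegrableOn (fun p : ℝ×ℝ =>
      (-2*γ') * (unc ζ (p.1,p.2,t) * pd e1 (pd e2 (pd e2 (unc ζ))) (p.1,p.2,t))) (QS L) :=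
    intQ_cont (continuous_const.mul (cZ.mul
      (contG cXYY continuous_fst continuous_snd continuous_const)))
  have i3 : IntegrableOn (fun p : ℝ×ℝ =>
      (-2*μ₁) * (a p.1 p.2 * (unc ζ (p.1,p.2,t))^2)) (QS L) :=
    (intQ_mul hma hM (by exact cZ.pow 2)).const_mul _
  have i4 : IntegrableOn (fun p : ℝ×ℝ =>
      (-2*μ₂) * (a p.1 p.2 * (unc ζ (p.1,p.2,t) * unc ζ (p.1,p.2,t-h)))) (QS L) :=
    (intQ_mul hma hM (by exact cZ.mul cZh)).const_mul _
  have i12 : IntegrableOn (fun p : ℝ×ℝ =>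
      (-2*α') * (unc ζ (p.1,p.2,t) * pd e1 (pd e1 (pd e1 (unc ζ))) (p.1,p.2,t))
      + (-2*γ') * (unc ζ (p.1,p.2,t) * pd e1 (pd e2 (pd e2 (unc ζ))) (p.1,p.2,t))) (QS L) :=
    i1.add i2
  have i34 : IntegrableOn (fun p : ℝ×ℝ =>
      (-2*μ₁) * (a p.1 p.2 * (unc ζ (p.1,p.2,t))^2)
      + (-2*μ₂) * (a p.1 p.2 * (unc ζ (p.1,p.2,t) * unc ζ (p.1,p.2,t-h)))) (QS L) :=
    i3.add i4
  have key : ∀ p ∈ QS L,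
      2 * unc ζ (p.1,p.2,t) * pd e3 (unc ζ) (p.1,p.2,t)
      = ((-2*α') * (unc ζ (p.1,p.2,t) * pd e1 (pd e1 (pd e1 (unc ζ))) (p.1,p.2,t))
          + (-2*γ') * (unc ζ (p.1,p.2,t) * pd e1 (pd e2 (pd e2 (unc ζ))) (p.1,p.2,t)))
        + ((-2*μ₁) * (a p.1 p.2 * (unc ζ (p.1,p.2,t))^2)
          + (-2*μ₂) * (a p.1 p.2 * (unc ζ (p.1,p.2,t) * unc ζ (p.1,p.2,t-h)))) := by
    rintro ⟨x, y⟩ ⟨hx, hy⟩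
    have hp := hpde x hx y hy t ht
    rw [pT_eq hζ, pX3_eq hζ, pXYY_eq hζ] at hp
    have hp' : pd e3 (unc ζ) (x,y,t) + α' * pd e1 (pd e1 (pd e1 (unc ζ))) (x,y,t)
        + γ' * pd e1 (pd e2 (pd e2 (unc ζ))) (x,y,t)
        + a x y * (μ₁ * unc ζ (x,y,t) + μ₂ * unc ζ (x,y,t-h)) = 0 := hp
    have hz : pd e3 (unc ζ) (x,y,t)
        = -(α' * pd e1 (pd e1 (pd e1 (unc ζ))) (x,y,t)
            + γ' * pd e1 (pd e2 (pd e2 (unc ζ))) (x,y,t)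
            + a x y * (μ₁ * unc ζ (x,y,t) + μ₂ * unc ζ (x,y,t-h))) := by linarith
    show 2 * unc ζ (x,y,t) * pd e3 (unc ζ) (x,y,t) = _
    rw [hz]
    ring
  rw [setIntegral_congr_fun (measurableSet_QS L) key]
  rw [MeasureTheory.integral_add i12 i34, MeasureTheory.integral_add i1 i2,
      MeasureTheory.integral_add i3 i4]
  rw [MeasureTheory.integral_const_mul, MeasureTheory.integral_const_mul,
      MeasureTheory.integral_const_mul, MeasureTheory.integral_const_mul]
  have bx := ibp_x (L := L) hζ (t := t) (fun y hy => by
    obtain ⟨h1, h2, h3, _⟩ := (hbc t ht).1 y hy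
    refine ⟨h1, h2, ?_⟩
    rw [← pX_eq hζ]
    exact h3)
  have by' := ibp_y (L := L) hζ (t := t)
    (fun y hy => by
      obtain ⟨_, _, _, h4⟩ := (hbc t ht).1 y hy
      rw [← pY_eq hζ]
      exact h4)
    (fun x hx => (hbc t ht).2 x hx)
  rw [bx, by']
  ring
end MainSec

end MuProof

/-- Energy dissipation for the linear μ-system.
There is `C > 0` depending only on `α, γ, μ₁, μ₂, ξ, h` such that for every
classical solution of the linear μ-system and every `t > 0`,
`(d/dt)E(t) ≤ -C (boundary terms + damping terms)`; in particular `E` is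
non-increasing. -/
theorem linear_mu_energy_dissipation
    (α γ h μ₁ μ₂ ξ : ℝ)
    (hα : 0 < α) (hγ : 0 < γ) (hh : 0 < h)
    (hμ₂ : 0 < μ₂) (hμ : μ₂ < μ₁)
    (hξ₁ : h * μ₂ < ξ) (hξ₂ : ξ < h * (2*μ₁ - μ₂)) :
    ∃ C > (0:ℝ), ∀ L > (0:ℝ), ∀ a : ℝ → ℝ → ℝ, Coeff a →
      ∀ ζ : ℝ → ℝ → ℝ → ℝ, IsLinMuSol L α γ h μ₁ μ₂ a ζ →
        (∀ t > (0:ℝ),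
          deriv (muE L h ξ a ζ) t ≤
            -C * ((∫ y in (0:ℝ)..L, (pX ζ 0 y t)^2)
              + (∫ y in (0:ℝ)..L, (pY ζ 0 y t)^2)
              + (∫ x in (0:ℝ)..L, ∫ y in (0:ℝ)..L, a x y * (ζ x y t)^2)
              + (∫ x in (0:ℝ)..L, ∫ y in (0:ℝ)..L, a x y * (ζ x y (t-h))^2)))
        ∧ AntitoneOn (muE L h ξ a ζ) (Ici (0:ℝ)) := by
  have h2h : (0:ℝ) < 2 := by norm_num
  set C := min (min (α/2) (γ/2)) (min (μ₁ - μ₂/2 - ξ/h/2) (ξ/h/2 - μ₂/2)) with hCdef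
  have hC1 : C ≤ α/2 := (min_le_left _ _).trans (min_le_left _ _)
  have hC2 : C ≤ γ/2 := (min_le_left _ _).trans (min_le_right _ _)
  have hC3 : C ≤ μ₁ - μ₂/2 - ξ/h/2 := (min_le_right _ _).trans (min_le_left _ _)
  have hC4 : C ≤ ξ/h/2 - μ₂/2 := (min_le_right _ _).trans (min_le_right _ _)
  have hdiv1 : ξ/h < 2*μ₁ - μ₂ := by
    rw [div_lt_iff₀ hh]; nlinarith
  have hdiv2 : μ₂ < ξ/h := by
    rw [lt_div_iff₀ hh]; nlinarith
  have hCpos : 0 < C := by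
    refine lt_min (lt_min (by linarith) (by linarith)) (lt_min (by linarith) (by linarith))
  refine ⟨C, hCpos, ?_⟩
  intro L hL a ha ζ hsol
  obtain ⟨hζ, hbc, hpde⟩ := hsol
  have hpde' : ∀ x ∈ Ioo (0:ℝ) L, ∀ y ∈ Ioo (0:ℝ) L, ∀ t > (0:ℝ),
      pT ζ x y t + α * pX3 ζ x y t + γ * pXYY ζ x y t
        + a x y * (μ₁ * ζ x y t + μ₂ * ζ x y (t - h)) = 0 := hpde
  obtain ⟨hma, han, M, hMb⟩ := ha
  have hM : ∀ p : ℝ×ℝ, |a p.1 p.2| ≤ M := fun p => by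
    rw [abs_of_nonneg (han _ _)]; exact hMb _ _
  have hM0 : 0 ≤ M := (han 0 0).trans (hMb 0 0)
  have hζ' : ContDiff ℝ (⊤ : ℕ∞) (MuProof.unc ζ) := hζ
  have cZt : ∀ s : ℝ, Continuous (fun p : ℝ×ℝ => MuProof.unc ζ (p.1, p.2, s)) := fun s =>
    MuProof.cont3 hζ continuous_fst continuous_snd continuous_const
  have hD : ∀ t : ℝ, HasDerivAt (muE L h ξ a ζ)
      ((1/2) * (∫ p in MuProof.QS L,
          2 * MuProof.unc ζ (p.1,p.2,t) * MuProof.pd MuProof.e3 (MuProof.unc ζ) (p.1,p.2,t))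
        + (ξ/2) * ((1/h) * ((∫ p in MuProof.QS L, a p.1 p.2 * (MuProof.unc ζ (p.1,p.2,t))^2)
            - (∫ p in MuProof.QS L, a p.1 p.2 * (MuProof.unc ζ (p.1,p.2,t-h))^2)))) t :=
    fun t => MuProof.muE_hasDeriv hL.le (ne_of_gt hh) hζ hma hM hM0 t
  -- main pointwise-in-time estimate
  have main : ∀ t > (0:ℝ),
      deriv (muE L h ξ a ζ) t ≤
        -C * ((∫ y in (0:ℝ)..L, (pX ζ 0 y t)^2)
          + (∫ y in (0:ℝ)..L, (pY ζ 0 y t)^2)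
          + (∫ x in (0:ℝ)..L, ∫ y in (0:ℝ)..L, a x y * (ζ x y t)^2)
          + (∫ x in (0:ℝ)..L, ∫ y in (0:ℝ)..L, a x y * (ζ x y (t-h))^2))
      ∧ 0 ≤ (∫ y in (0:ℝ)..L, (pX ζ 0 y t)^2)
          + (∫ y in (0:ℝ)..L, (pY ζ 0 y t)^2)
          + (∫ x in (0:ℝ)..L, ∫ y in (0:ℝ)..L, a x y * (ζ x y t)^2)
          + (∫ x in (0:ℝ)..L, ∫ y in (0:ℝ)..L, a x y * (ζ x y (t-h))^2) := by
    intro t ht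
    have hval := (hD t).deriv
    have heq := MuProof.muE_deriv_eq (α' := α) (γ' := γ) hL hh hζ hbc hpde' hma hM ht
    rw [heq] at hval
    -- statement-side integrals rewritten
    have eS1 : (∫ y in (0:ℝ)..L, (pX ζ 0 y t)^2)
        = ∫ y in Ioo (0:ℝ) L, (MuProof.pd MuProof.e1 (MuProof.unc ζ) (0,y,t))^2 := by
      rw [MuProof.ii_Ioo hL.le]
      exact setIntegral_congr_fun measurableSet_Ioo (fun y _ => by rw [MuProof.pX_eq hζ])
    have eS2 : (∫ y in (0:ℝ)..L, (pY ζ 0 y t)^2)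
        = ∫ y in Ioo (0:ℝ) L, (MuProof.pd MuProof.e2 (MuProof.unc ζ) (0,y,t))^2 := by
      rw [MuProof.ii_Ioo hL.le]
      exact setIntegral_congr_fun measurableSet_Ioo (fun y _ => by rw [MuProof.pY_eq hζ])
    have eS3 : (∫ x in (0:ℝ)..L, ∫ y in (0:ℝ)..L, a x y * (ζ x y t)^2)
        = ∫ p in MuProof.QS L, a p.1 p.2 * (MuProof.unc ζ (p.1,p.2,t))^2 :=
      MuProof.double_eq' hL.le (MuProof.intQ_mul hma hM (by exact (cZt t).pow 2))
    have eS4 : (∫ x in (0:ℝ)..L, ∫ y in (0:ℝ)..L, a x y * (ζ x y (t-h))^2)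
        = ∫ p in MuProof.QS L, a p.1 p.2 * (MuProof.unc ζ (p.1,p.2,t-h))^2 :=
      MuProof.double_eq' hL.le (MuProof.intQ_mul hma hM (by exact (cZt (t-h)).pow 2))
    -- nonnegativity
    have hBx : 0 ≤ ∫ y in Ioo (0:ℝ) L, (MuProof.pd MuProof.e1 (MuProof.unc ζ) (0,y,t))^2 :=
      setIntegral_nonneg measurableSet_Ioo (fun y _ => sq_nonneg _)
    have hBy : 0 ≤ ∫ y in Ioo (0:ℝ) L, (MuProof.pd MuProof.e2 (MuProof.unc ζ) (0,y,t))^2 :=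
      setIntegral_nonneg measurableSet_Ioo (fun y _ => sq_nonneg _)
    have hIa : 0 ≤ ∫ p in MuProof.QS L, a p.1 p.2 * (MuProof.unc ζ (p.1,p.2,t))^2 :=
      setIntegral_nonneg (MuProof.measurableSet_QS L)
        (fun p _ => mul_nonneg (han _ _) (sq_nonneg _))
    have hIh : 0 ≤ ∫ p in MuProof.QS L, a p.1 p.2 * (MuProof.unc ζ (p.1,p.2,t-h))^2 :=
      setIntegral_nonneg (MuProof.measurableSet_QS L)
        (fun p _ => mul_nonneg (han _ _) (sq_nonneg _))
    -- Young's inequality for the cross term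
    have iLHS : IntegrableOn (fun p : ℝ×ℝ => (-(1/2)) *
        (a p.1 p.2 * (MuProof.unc ζ (p.1,p.2,t))^2
          + a p.1 p.2 * (MuProof.unc ζ (p.1,p.2,t-h))^2)) (MuProof.QS L) :=
      ((MuProof.intQ_mul hma hM (by exact (cZt t).pow 2)).add
        (MuProof.intQ_mul hma hM (by exact (cZt (t-h)).pow 2))).const_mul _
    have iRHS : IntegrableOn (fun p : ℝ×ℝ =>
        a p.1 p.2 * (MuProof.unc ζ (p.1,p.2,t) * MuProof.unc ζ (p.1,p.2,t-h)))
        (MuProof.QS L) :=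
      MuProof.intQ_mul hma hM (by exact (cZt t).mul (cZt (t-h)))
    have young0 := setIntegral_mono_on iLHS iRHS (MuProof.measurableSet_QS L)
      (fun p _ => by
        nlinarith [mul_nonneg (han p.1 p.2)
          (sq_nonneg (MuProof.unc ζ (p.1,p.2,t) + MuProof.unc ζ (p.1,p.2,t-h)))])
    rw [MeasureTheory.integral_const_mul,
      MeasureTheory.integral_add (MuProof.intQ_mul hma hM (by exact (cZt t).pow 2))
        (MuProof.intQ_mul hma hM (by exact (cZt (t-h)).pow 2))] at young0
    set IX := ∫ y in Ioo (0:ℝ) L, (MuProof.pd MuProof.e1 (MuProof.unc ζ) (0,y,t))^2 with hIX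
    set IY := ∫ y in Ioo (0:ℝ) L, (MuProof.pd MuProof.e2 (MuProof.unc ζ) (0,y,t))^2 with hIY
    set JA := ∫ p in MuProof.QS L, a p.1 p.2 * (MuProof.unc ζ (p.1,p.2,t))^2 with hJA
    set JH := ∫ p in MuProof.QS L, a p.1 p.2 * (MuProof.unc ζ (p.1,p.2,t-h))^2 with hJH
    set JC := ∫ p in MuProof.QS L,
      a p.1 p.2 * (MuProof.unc ζ (p.1,p.2,t) * MuProof.unc ζ (p.1,p.2,t-h)) with hJC
    constructor
    · rw [hval, eS1, eS2, eS3, eS4]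
      have m1 := mul_le_mul_of_nonneg_right hC1 hBx
      have m2 := mul_le_mul_of_nonneg_right hC2 hBy
      have m3 := mul_le_mul_of_nonneg_right
        (show C + μ₂/2 ≤ μ₁ - ξ/h/2 by linarith) hIa
      have m4 := mul_le_mul_of_nonneg_right
        (show C + μ₂/2 ≤ ξ/h/2 by linarith) hIh
      have m5 := mul_le_mul_of_nonneg_left young0 hμ₂.le
      have hhinv : (ξ/2) * ((1/h) * (JA - JH)) = (ξ/h/2) * JA - (ξ/h/2) * JH := by
        field_simp
      rw [hhinv]
      linarith [m1, m2, m3, m4, m5]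
    · have n1 : 0 ≤ (∫ y in (0:ℝ)..L, (pX ζ 0 y t)^2) := by rw [eS1]; exact hBx
      have n2 : 0 ≤ (∫ y in (0:ℝ)..L, (pY ζ 0 y t)^2) := by rw [eS2]; exact hBy
      have n3 : 0 ≤ (∫ x in (0:ℝ)..L, ∫ y in (0:ℝ)..L, a x y * (ζ x y t)^2) := by
        rw [eS3]; exact hIa
      have n4 : 0 ≤ (∫ x in (0:ℝ)..L, ∫ y in (0:ℝ)..L, a x y * (ζ x y (t-h))^2) := by
        rw [eS4]; exact hIh
      linarith
  refine ⟨fun t ht => (main t ht).1, ?_⟩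
  have hdiffble : Differentiable ℝ (muE L h ξ a ζ) := fun t => (hD t).differentiableAt
  refine antitoneOn_of_deriv_nonpos (convex_Ici 0) hdiffble.continuous.continuousOn
    (hdiffble.differentiableOn) ?_
  intro x hx
  rw [interior_Ici] at hx
  obtain ⟨hle, hSnn⟩ := main x hx
  have hmul : 0 ≤ C * ((∫ y in (0:ℝ)..L, (pX ζ 0 y x)^2)
      + (∫ y in (0:ℝ)..L, (pY ζ 0 y x)^2)
      + (∫ x' in (0:ℝ)..L, ∫ y in (0:ℝ)..L, a x' y * (ζ x' y x)^2)
      + (∫ x' in (0:ℝ)..L, ∫ y in (0:ℝ)..L, a x' y * (ζ x' y (x-h))^2)) :=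
    mul_nonneg hCpos.le hSnn
  linarith
end
end

section
/- Every classical solution ζ of the linear μ-system satisfies, for all t ≥ 0, the energy monotonicity estimate (1/2)∫_Ω ζ(x,y,t)² dx dy + (ξ/2)∫_Ω∫₀¹ a(x,y) ζ(x,y,t−ρh)² dρ dx dy ≤ (1/2)∫_Ω ζ₀(x,y)² dx dy + (ξ/2)∫_Ω∫₀¹ a(x,y) z₀(x,y,ρ)² dρ dx dy. -/
open MeasureTheory intervalIntegral Set

noncomputable section

/-! ### Auxiliary machinery for the energy estimate -/

section DirectionalDeriv

open Filter Metric

variable {E : Type*} [NormedAddCommGroup E] [NormedSpace ℝ E]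

/-- Directional derivative operator. -/
def Dv (v : E) (f : E → ℝ) (p : E) : ℝ := fderiv ℝ f p v

lemma Dv_contDiff {f : E → ℝ} (hf : ContDiff ℝ (⊤ : ℕ∞) f) (v : E) :
    ContDiff ℝ (⊤ : ℕ∞) (Dv v f) :=
  (hf.fderiv_right (by simp)).clm_apply contDiff_const

lemma Dv_continuous {f : E → ℝ} (hf : ContDiff ℝ (⊤ : ℕ∞) f) (v : E) :
    Continuous (Dv v f) := (Dv_contDiff hf v).continuous

lemma fderiv_fderiv_apply {f : E → ℝ} (hf : ContDiff ℝ (⊤ : ℕ∞) f) (q v w : E) :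
    fderiv ℝ (fun p => fderiv ℝ f p w) q v = fderiv ℝ (fderiv ℝ f) q v w := by
  have h1 : DifferentiableAt ℝ (fderiv ℝ f) q :=
    ((hf.fderiv_right (m := (⊤ : ℕ∞)) (by simp)).differentiable (by simp)) q
  rw [fderiv_clm_apply h1 (differentiableAt_const w)]
  simp

lemma Dv_comm {f : E → ℝ} (hf : ContDiff ℝ (⊤ : ℕ∞) f) (v w : E) (q : E) :
    Dv v (Dv w f) q = Dv w (Dv v f) q := by
  show fderiv ℝ (fun p => fderiv ℝ f p w) q v = fderiv ℝ (fun p => fderiv ℝ f p v) q w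
  rw [fderiv_fderiv_apply hf, fderiv_fderiv_apply hf]
  exact second_derivative_symmetric (fun z => (hf.differentiable (by simp) z).hasFDerivAt)
    (((hf.fderiv_right (m := (⊤ : ℕ∞)) (by simp)).differentiable (by simp) q).hasFDerivAt) v w

end DirectionalDeriv

section Slices

/-- horizontal direction -/
def vx : ℝ × ℝ := (1, 0)
/-- vertical direction -/
def vy : ℝ × ℝ := (0, 1)

lemma hasDerivAt_sliceX {f : ℝ × ℝ → ℝ} (hf : ContDiff ℝ (⊤ : ℕ∞) f) (x y : ℝ) :
    HasDerivAt (fun s => f (s, y)) (Dv vx f (x, y)) x := by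
  have h := ((hf.differentiable (by simp)) (x, y)).hasFDerivAt
  have hl : HasDerivAt (fun s : ℝ => ((s, y) : ℝ × ℝ)) vx x := by
    simpa [vx] using (hasDerivAt_id x).prodMk (hasDerivAt_const x y)
  exact h.comp_hasDerivAt x hl

lemma hasDerivAt_sliceY {f : ℝ × ℝ → ℝ} (hf : ContDiff ℝ (⊤ : ℕ∞) f) (x y : ℝ) :
    HasDerivAt (fun r => f (x, r)) (Dv vy f (x, y)) y := by
  have h := ((hf.differentiable (by simp)) (x, y)).hasFDerivAt
  have hl : HasDerivAt (fun r : ℝ => ((x, r) : ℝ × ℝ)) vy y := by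
    simpa [vy] using (hasDerivAt_const y x).prodMk (hasDerivAt_id y)
  exact h.comp_hasDerivAt y hl

lemma deriv_sliceX {f : ℝ × ℝ → ℝ} (hf : ContDiff ℝ (⊤ : ℕ∞) f) (y : ℝ) :
    deriv (fun s => f (s, y)) = fun x => Dv vx f (x, y) :=
  funext fun x => (hasDerivAt_sliceX hf x y).deriv

lemma deriv_sliceY {f : ℝ × ℝ → ℝ} (hf : ContDiff ℝ (⊤ : ℕ∞) f) (x : ℝ) :
    deriv (fun r => f (x, r)) = fun y => Dv vy f (x, y) :=
  funext fun y => (hasDerivAt_sliceY hf x y).deriv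

/-- The time-`t` slice of a function of three variables. -/
def sliceT (ζ : ℝ → ℝ → ℝ → ℝ) (t : ℝ) : ℝ × ℝ → ℝ := fun q => ζ q.1 q.2 t

lemma contDiff_sliceT {ζ : ℝ → ℝ → ℝ → ℝ} (hζ : Smooth3 ζ) (t : ℝ) :
    ContDiff ℝ (⊤ : ℕ∞) (sliceT ζ t) :=
  hζ.comp (contDiff_fst.prodMk (contDiff_snd.prodMk contDiff_const))

lemma hasDerivAt_T {ζ : ℝ → ℝ → ℝ → ℝ} (hζ : Smooth3 ζ) (x y t : ℝ) :
    HasDerivAt (fun τ => ζ x y τ) (pT ζ x y t) t := by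
  have hli : ContDiff ℝ (⊤ : ℕ∞) (fun τ : ℝ => ζ x y τ) :=
    hζ.comp (contDiff_const.prodMk (contDiff_const.prodMk contDiff_id))
  have h := (hli.differentiable (by simp) t).hasDerivAt
  exact h

lemma pT_eq_fderiv {ζ : ℝ → ℝ → ℝ → ℝ} (hζ : Smooth3 ζ) (x y t : ℝ) :
    pT ζ x y t
      = Dv ((0:ℝ),(0:ℝ),(1:ℝ)) (fun p : ℝ × ℝ × ℝ => ζ p.1 p.2.1 p.2.2) (x, y, t) := by
  have h := ((hζ.differentiable (by simp)) (x, y, t)).hasFDerivAt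
  have hl : HasDerivAt (fun τ : ℝ => ((x, y, τ) : ℝ × ℝ × ℝ)) ((0:ℝ),(0:ℝ),(1:ℝ)) t :=
    (hasDerivAt_const t x).prodMk ((hasDerivAt_const t y).prodMk (hasDerivAt_id t))
  have h2 := h.comp_hasDerivAt t hl
  exact h2.deriv

lemma pT_cont {ζ : ℝ → ℝ → ℝ → ℝ} (hζ : Smooth3 ζ) :
    Continuous fun p : ℝ × ℝ × ℝ => pT ζ p.1 p.2.1 p.2.2 := by
  have he : (fun p : ℝ × ℝ × ℝ => pT ζ p.1 p.2.1 p.2.2)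
      = Dv ((0:ℝ),(0:ℝ),(1:ℝ)) (fun p : ℝ × ℝ × ℝ => ζ p.1 p.2.1 p.2.2) :=
    funext fun p => pT_eq_fderiv hζ p.1 p.2.1 p.2.2
  rw [he]; exact Dv_continuous hζ _

lemma pX_eq {ζ : ℝ → ℝ → ℝ → ℝ} (hζ : Smooth3 ζ) (x y t : ℝ) :
    pX ζ x y t = Dv vx (sliceT ζ t) (x, y) :=
  (hasDerivAt_sliceX (contDiff_sliceT hζ t) x y).deriv

lemma pY_eq {ζ : ℝ → ℝ → ℝ → ℝ} (hζ : Smooth3 ζ) (x y t : ℝ) :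
    pY ζ x y t = Dv vy (sliceT ζ t) (x, y) :=
  (hasDerivAt_sliceY (contDiff_sliceT hζ t) x y).deriv

lemma pX3_eq {ζ : ℝ → ℝ → ℝ → ℝ} (hζ : Smooth3 ζ) (x y t : ℝ) :
    pX3 ζ x y t = Dv vx (Dv vx (Dv vx (sliceT ζ t))) (x, y) := by
  have hu : ContDiff ℝ (⊤ : ℕ∞) (sliceT ζ t) := contDiff_sliceT hζ t
  have h1 : (fun s => ζ s y t) = (fun s => sliceT ζ t (s, y)) := rfl
  rw [pX3, h1, show (3:ℕ) = 2+1 from rfl, iteratedDeriv_succ,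
    show (2:ℕ) = 1+1 from rfl, iteratedDeriv_succ, iteratedDeriv_one,
    deriv_sliceX hu y, deriv_sliceX (Dv_contDiff hu vx) y,
    deriv_sliceX (Dv_contDiff (Dv_contDiff hu vx) vx) y]

lemma pXYY_eq {ζ : ℝ → ℝ → ℝ → ℝ} (hζ : Smooth3 ζ) (x y t : ℝ) :
    pXYY ζ x y t = Dv vx (Dv vy (Dv vy (sliceT ζ t))) (x, y) := by
  have hu : ContDiff ℝ (⊤ : ℕ∞) (sliceT ζ t) := contDiff_sliceT hζ t
  have h1 : (fun s => iteratedDeriv 2 (fun r => ζ s r t) y)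
      = (fun s => Dv vy (Dv vy (sliceT ζ t)) (s, y)) := by
    funext s
    have h2 : (fun r => ζ s r t) = (fun r => sliceT ζ t (s, r)) := rfl
    rw [h2, show (2:ℕ) = 1+1 from rfl, iteratedDeriv_succ, iteratedDeriv_one,
      deriv_sliceY hu s, deriv_sliceY (Dv_contDiff hu vy) s]
  rw [pXYY, h1, deriv_sliceX (Dv_contDiff (Dv_contDiff hu vy) vy) y]

lemma deriv_zero_on {g : ℝ → ℝ} {c d x : ℝ} (hbc : ∀ s ∈ Ioo c d, g s = 0)
    (hx : x ∈ Ioo c d) : deriv g x = 0 := by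
  have hev : g =ᶠ[nhds x] (fun _ => (0:ℝ)) :=
    Filter.eventually_of_mem (isOpen_Ioo.mem_nhds hx) hbc
  rw [hev.deriv_eq, deriv_const]

end Slices

section Measures

/-- Restricted 1-d measure. -/
def mI (L : ℝ) : Measure ℝ := volume.restrict (Ioc 0 L)
/-- measure on the square -/
def mSq (L : ℝ) : Measure (ℝ × ℝ) := (mI L).prod (mI L)
/-- measure on `[0,1]` -/
def m01 : Measure ℝ := volume.restrict (Ioc 0 1)
/-- measure on the cube -/
def mCube (L : ℝ) : Measure ((ℝ × ℝ) × ℝ) := (mSq L).prod m01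

instance (L : ℝ) : IsFiniteMeasure (mI L) :=
  ⟨by rw [mI, Measure.restrict_apply_univ, Real.volume_Ioc]; exact ENNReal.ofReal_lt_top⟩

instance : IsFiniteMeasure m01 :=
  ⟨by rw [m01, Measure.restrict_apply_univ, Real.volume_Ioc]; exact ENNReal.ofReal_lt_top⟩

instance (L : ℝ) : IsFiniteMeasure (mSq L) := by unfold mSq; infer_instance

instance (L : ℝ) : IsFiniteMeasure (mCube L) := by unfold mCube; infer_instance

lemma mSq_eq (L : ℝ) : mSq L = volume.restrict (Ioc 0 L ×ˢ Ioc 0 L) := by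
  rw [mSq, mI, Measure.prod_restrict, ← Measure.volume_eq_prod]

lemma mCube_eq (L : ℝ) :
    mCube L = volume.restrict ((Ioc 0 L ×ˢ Ioc 0 L) ×ˢ Ioc 0 1) := by
  rw [mCube, mSq_eq, m01, Measure.prod_restrict, ← Measure.volume_eq_prod]

lemma mI_eq_Ioo (L : ℝ) : mI L = volume.restrict (Ioo 0 L) :=
  Measure.restrict_congr_set Ioo_ae_eq_Ioc.symm

lemma ae_mSq (L : ℝ) : ∀ᵐ z ∂(mSq L), z.1 ∈ Ioo 0 L ∧ z.2 ∈ Ioo 0 L := by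
  have h : mSq L = volume.restrict (Ioo 0 L ×ˢ Ioo 0 L) := by
    rw [mSq, mI_eq_Ioo, Measure.prod_restrict, ← Measure.volume_eq_prod]
  rw [h]
  filter_upwards [ae_restrict_mem (measurableSet_Ioo.prod measurableSet_Ioo)] with z hz
  exact hz

lemma ae_mCube (L : ℝ) :
    ∀ᵐ w ∂(mCube L), (w.1.1 ∈ Ioc 0 L ∧ w.1.2 ∈ Ioc 0 L) ∧ w.2 ∈ Ioc 0 1 := by
  rw [mCube_eq]
  filter_upwards [ae_restrict_mem (((measurableSet_Ioc.prod measurableSet_Ioc).prod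
    measurableSet_Ioc))] with w hw
  exact hw

lemma integrable_cont2 {L : ℝ} {f : ℝ × ℝ → ℝ} (hf : Continuous f) :
    Integrable f (mSq L) := by
  rw [mSq_eq]
  exact (hf.continuousOn.integrableOn_compact (isCompact_Icc.prod isCompact_Icc)).mono_set
    (Set.prod_mono Ioc_subset_Icc_self Ioc_subset_Icc_self)

lemma integrable_cont3 {L : ℝ} {f : (ℝ × ℝ) × ℝ → ℝ} (hf : Continuous f) :
    Integrable f (mCube L) := by
  rw [mCube_eq]
  exact (hf.continuousOn.integrableOn_compact
    ((isCompact_Icc.prod isCompact_Icc).prod isCompact_Icc)).mono_set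
    (Set.prod_mono (Set.prod_mono Ioc_subset_Icc_self Ioc_subset_Icc_self)
      Ioc_subset_Icc_self)

lemma integrable_a2 {L : ℝ} {a : ℝ → ℝ → ℝ} (ha : Coeff a) {g : ℝ × ℝ → ℝ}
    (hg : Continuous g) : Integrable (fun z : ℝ × ℝ => a z.1 z.2 * g z) (mSq L) := by
  obtain ⟨M, hM⟩ := ha.2.2
  refine (integrable_cont2 hg).bdd_mul (ha.1.aestronglyMeasurable) (c := M) (Filter.Eventually.of_forall fun z => ?_)
  rw [Real.norm_eq_abs, abs_of_nonneg (ha.2.1 _ _)]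
  exact hM _ _

lemma integrable_a3 {L : ℝ} {a : ℝ → ℝ → ℝ} (ha : Coeff a) {g : (ℝ × ℝ) × ℝ → ℝ}
    (hg : Continuous g) :
    Integrable (fun w : (ℝ × ℝ) × ℝ => a w.1.1 w.1.2 * g w) (mCube L) := by
  obtain ⟨M, hM⟩ := ha.2.2
  refine (integrable_cont3 hg).bdd_mul ((ha.1.comp measurable_fst).aestronglyMeasurable)
    (c := M) (Filter.Eventually.of_forall fun w => ?_)
  rw [Real.norm_eq_abs, abs_of_nonneg (ha.2.1 _ _)]
  exact hM _ _

lemma integral_mSq {L : ℝ} (hL : 0 < L) {f : ℝ × ℝ → ℝ} (hf : Integrable f (mSq L)) :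
    (∫ x in (0:ℝ)..L, ∫ y in (0:ℝ)..L, f (x, y)) = ∫ z, f z ∂(mSq L) := by
  rw [intervalIntegral.integral_of_le hL.le]
  have h1 : ∀ x : ℝ, (∫ y in (0:ℝ)..L, f (x, y)) = ∫ y in Ioc (0:ℝ) L, f (x, y) :=
    fun x => intervalIntegral.integral_of_le hL.le
  simp only [h1]
  exact (MeasureTheory.integral_prod f hf).symm

lemma integral_mSq_set {L : ℝ} {f : ℝ × ℝ → ℝ} (hf : Integrable f (mSq L)) :
    (∫ z, f z ∂(mSq L)) = ∫ x in Ioc (0:ℝ) L, ∫ y in Ioc (0:ℝ) L, f (x, y) :=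
  MeasureTheory.integral_prod f hf

lemma integral_mSq_swap {L : ℝ} {f : ℝ × ℝ → ℝ} (hf : Integrable f (mSq L)) :
    (∫ z, f z ∂(mSq L)) = ∫ y in Ioc (0:ℝ) L, ∫ x in Ioc (0:ℝ) L, f (x, y) := by
  rw [integral_mSq_set hf]
  exact MeasureTheory.integral_integral_swap hf

lemma integral_mCube {L : ℝ} (hL : 0 < L) {g : (ℝ × ℝ) × ℝ → ℝ}
    (hg : Integrable g (mCube L)) :
    (∫ x in (0:ℝ)..L, ∫ y in (0:ℝ)..L, ∫ ρ in (0:ℝ)..1, g ((x, y), ρ))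
      = ∫ w, g w ∂(mCube L) := by
  have h1 : ∀ x y : ℝ, (∫ ρ in (0:ℝ)..1, g ((x, y), ρ)) = ∫ ρ in Ioc (0:ℝ) 1, g ((x, y), ρ) :=
    fun _ _ => intervalIntegral.integral_of_le zero_le_one
  simp only [h1]
  rw [show (∫ w, g w ∂(mCube L)) = ∫ z, (∫ ρ in Ioc (0:ℝ) 1, g (z, ρ)) ∂(mSq L) from
    MeasureTheory.integral_prod g hg]
  exact integral_mSq hL hg.integral_prod_left

end Measures

section Quad

lemma quad_nonneg {A C B z w : ℝ} (hA : 0 < A) (hAC : B^2 ≤ 4*(A*C)) :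
    0 ≤ A*z^2 + B*(z*w) + C*w^2 := by
  nlinarith [sq_nonneg (2*A*z + B*w), sq_nonneg w,
    mul_nonneg (sub_nonneg.2 hAC) (sq_nonneg w)]

end Quad
section IBP

open Filter Metric

variable {L α γ : ℝ} {ζ : ℝ → ℝ → ℝ → ℝ}

/-- Integration by parts: the dispersive terms give a nonnegative contribution. -/
lemma I1_nonneg (hζ : Smooth3 ζ) (hbc : ZKbc L ζ) (hL : 0 < L) (hα : 0 < α)
    (hγ : 0 < γ) {t : ℝ} (ht : 0 < t) :
    0 ≤ ∫ z, (ζ z.1 z.2 t *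
        (α * Dv vx (Dv vx (Dv vx (sliceT ζ t))) (z.1, z.2)
          + γ * Dv vx (Dv vy (Dv vy (sliceT ζ t))) (z.1, z.2))) ∂(mSq L) := by
  set u := sliceT ζ t with hu_def
  have hu : ContDiff ℝ (⊤ : ℕ∞) u := contDiff_sliceT hζ t
  have hux : ContDiff ℝ (⊤ : ℕ∞) (Dv vx u) := Dv_contDiff hu vx
  have huy : ContDiff ℝ (⊤ : ℕ∞) (Dv vy u) := Dv_contDiff hu vy
  have huxx : ContDiff ℝ (⊤ : ℕ∞) (Dv vx (Dv vx u)) := Dv_contDiff hux vx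
  have huyy : ContDiff ℝ (⊤ : ℕ∞) (Dv vy (Dv vy u)) := Dv_contDiff huy vy
  have huxy : ContDiff ℝ (⊤ : ℕ∞) (Dv vx (Dv vy u)) := Dv_contDiff huy vx
  have huyx : ContDiff ℝ (⊤ : ℕ∞) (Dv vy (Dv vx u)) := Dv_contDiff hux vy
  have huxxx : ContDiff ℝ (⊤ : ℕ∞) (Dv vx (Dv vx (Dv vx u))) := Dv_contDiff huxx vx
  have huxyy : ContDiff ℝ (⊤ : ℕ∞) (Dv vx (Dv vy (Dv vy u))) := Dv_contDiff huyy vx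
  -- potential functions
  set P : ℝ × ℝ → ℝ := fun q => α * (u q * Dv vx (Dv vx u) q)
      - (α/2) * (Dv vx u q * Dv vx u q)
      + γ * (u q * Dv vy (Dv vy u) q) + (γ/2) * (Dv vy u q * Dv vy u q) with hP_def
  set Qf : ℝ × ℝ → ℝ := fun q => -(γ * (Dv vx u q * Dv vy u q)) with hQ_def
  set R1 : ℝ × ℝ → ℝ := fun q =>
      α * (Dv vx u q * Dv vx (Dv vx u) q + u q * Dv vx (Dv vx (Dv vx u)) q)
      - (α/2) * (Dv vx (Dv vx u) q * Dv vx u q + Dv vx u q * Dv vx (Dv vx u) q)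
      + γ * (Dv vx u q * Dv vy (Dv vy u) q + u q * Dv vx (Dv vy (Dv vy u)) q)
      + (γ/2) * (Dv vx (Dv vy u) q * Dv vy u q + Dv vy u q * Dv vx (Dv vy u) q) with hR1_def
  set R2 : ℝ × ℝ → ℝ := fun q =>
      -(γ * (Dv vy (Dv vx u) q * Dv vy u q + Dv vx u q * Dv vy (Dv vy u) q)) with hR2_def
  have hR1cont : Continuous R1 := by
    rw [hR1_def]
    exact ((((continuous_const.mul (((Dv_continuous hu vx).mul
      (Dv_continuous hux vx)).add ((hu.continuous).mul (Dv_continuous huxx vx)))).sub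
      (continuous_const.mul (((Dv_continuous hux vx).mul (Dv_continuous hu vx)).add
      ((Dv_continuous hu vx).mul (Dv_continuous hux vx))))).add
      (continuous_const.mul (((Dv_continuous hu vx).mul (Dv_continuous huy vy)).add
      ((hu.continuous).mul (Dv_continuous huyy vx))))).add
      (continuous_const.mul (((Dv_continuous huy vx).mul (Dv_continuous hu vy)).add
      ((Dv_continuous hu vy).mul (Dv_continuous huy vx)))))
  have hR2cont : Continuous R2 := by
    rw [hR2_def]
    exact (continuous_const.mul (((Dv_continuous hux vy).mul (Dv_continuous hu vy)).add
      ((Dv_continuous hu vx).mul (Dv_continuous huy vy)))).neg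
  -- slice derivatives
  have hPx : ∀ x y : ℝ, HasDerivAt (fun s => P (s, y)) (R1 (x, y)) x := by
    intro x y
    have h1 := hasDerivAt_sliceX hu x y
    have h2 := hasDerivAt_sliceX hux x y
    have h3 := hasDerivAt_sliceX huxx x y
    have h4 := hasDerivAt_sliceX huy x y
    have h5 := hasDerivAt_sliceX huyy x y
    exact ((((h1.mul h3).const_mul α).sub ((h2.mul h2).const_mul (α/2))).add
      ((h1.mul h5).const_mul γ)).add ((h4.mul h4).const_mul (γ/2))
  have hQy : ∀ x y : ℝ, HasDerivAt (fun r => Qf (x, r)) (R2 (x, y)) y := by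
    intro x y
    have h1 := hasDerivAt_sliceY hux x y
    have h2 := hasDerivAt_sliceY huy x y
    exact (((h1.mul h2).const_mul γ)).neg
  -- pointwise divergence identity
  have hdiv : ∀ z : ℝ × ℝ, ζ z.1 z.2 t *
      (α * Dv vx (Dv vx (Dv vx u)) (z.1, z.2) + γ * Dv vx (Dv vy (Dv vy u)) (z.1, z.2))
        = R1 z + R2 z := by
    intro z
    have hz : ζ z.1 z.2 t = u z := rfl
    have hzz : ((z.1, z.2) : ℝ × ℝ) = z := rfl
    rw [hz, hzz]
    simp only [hR1_def, hR2_def]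
    rw [Dv_comm hu vx vy z]
    ring
  have hI : (∫ z, (ζ z.1 z.2 t *
      (α * Dv vx (Dv vx (Dv vx u)) (z.1, z.2) + γ * Dv vx (Dv vy (Dv vy u)) (z.1, z.2))) ∂(mSq L))
      = (∫ z, R1 z ∂(mSq L)) + ∫ z, R2 z ∂(mSq L) := by
    rw [show (fun z : ℝ × ℝ => ζ z.1 z.2 t *
      (α * Dv vx (Dv vx (Dv vx u)) (z.1, z.2) + γ * Dv vx (Dv vy (Dv vy u)) (z.1, z.2)))
        = fun z => R1 z + R2 z from funext hdiv]
    exact MeasureTheory.integral_add (integrable_cont2 hR1cont) (integrable_cont2 hR2cont)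
  -- boundary facts
  have hbct := hbc t ht
  -- the R2 integral vanishes
  have hR2zero : (∫ z, R2 z ∂(mSq L)) = 0 := by
    rw [integral_mSq_set (integrable_cont2 hR2cont)]
    have hinner : ∀ x : ℝ, (∫ y in Ioc (0:ℝ) L, R2 (x, y)) = Qf (x, L) - Qf (x, 0) := by
      intro x
      rw [← intervalIntegral.integral_of_le hL.le]
      exact intervalIntegral.integral_eq_sub_of_hasDerivAt (fun y _ => hQy x y)
        ((hR2cont.comp (continuous_const.prodMk continuous_id)).intervalIntegrable 0 L)
    simp only [hinner]
    apply MeasureTheory.integral_eq_zero_of_ae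
    have hae : ∀ᵐ x ∂(volume.restrict (Ioc (0:ℝ) L)), x ∈ Ioo 0 L := by
      rw [show volume.restrict (Ioc (0:ℝ) L) = mI L from rfl, mI_eq_Ioo]
      exact ae_restrict_mem measurableSet_Ioo
    filter_upwards [hae] with x hx
    have hb0 : Dv vx u (x, 0) = 0 := by
      rw [← (hasDerivAt_sliceX hu x 0).deriv]
      exact deriv_zero_on (fun s hs => (hbct.2 s hs).1) hx
    have hbL : Dv vx u (x, L) = 0 := by
      rw [← (hasDerivAt_sliceX hu x L).deriv]
      exact deriv_zero_on (fun s hs => (hbct.2 s hs).2) hx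
    simp only [hQ_def, Pi.zero_apply]
    rw [hb0, hbL]
    ring
  -- the R1 integral is nonnegative
  have hR1nonneg : 0 ≤ ∫ z, R1 z ∂(mSq L) := by
    rw [integral_mSq_swap (integrable_cont2 hR1cont)]
    have hinner : ∀ y : ℝ, (∫ x in Ioc (0:ℝ) L, R1 (x, y)) = P (L, y) - P (0, y) := by
      intro y
      rw [← intervalIntegral.integral_of_le hL.le]
      exact intervalIntegral.integral_eq_sub_of_hasDerivAt (fun x _ => hPx x y)
        ((hR1cont.comp (continuous_id.prodMk continuous_const)).intervalIntegrable 0 L)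
    simp only [hinner]
    apply MeasureTheory.integral_nonneg_of_ae
    have hae : ∀ᵐ y ∂(volume.restrict (Ioc (0:ℝ) L)), y ∈ Ioo 0 L := by
      rw [show volume.restrict (Ioc (0:ℝ) L) = mI L from rfl, mI_eq_Ioo]
      exact ae_restrict_mem measurableSet_Ioo
    filter_upwards [hae] with y hy
    have h0 : u (0, y) = 0 := (hbct.1 y hy).1
    have hL0 : u (L, y) = 0 := (hbct.1 y hy).2.1
    have hxL : Dv vx u (L, y) = 0 := by
      rw [← pX_eq hζ L y t]; exact (hbct.1 y hy).2.2.1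
    have hyL : Dv vy u (L, y) = 0 := by
      rw [← pY_eq hζ L y t]; exact (hbct.1 y hy).2.2.2
    have hy0 : Dv vy u (0, y) = 0 := by
      rw [← (hasDerivAt_sliceY hu 0 y).deriv]
      exact deriv_zero_on (fun r hr => (hbct.1 r hr).1) hy
    simp only [hP_def, Pi.zero_apply]
    rw [h0, hL0, hxL, hyL, hy0]
    have : (0:ℝ) ≤ (α/2) * (Dv vx u (0, y) * Dv vx u (0, y)) :=
      mul_nonneg (by linarith) (mul_self_nonneg _)
    nlinarith [this]
  rw [hI]
  linarith
end IBP
section Param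

open Filter Metric

variable {L h : ℝ} {a : ℝ → ℝ → ℝ} {ζ : ℝ → ℝ → ℝ → ℝ}

lemma cont_zt (hζ : Smooth3 ζ) : Continuous fun p : ℝ × ℝ × ℝ => ζ p.1 p.2.1 p.2.2 :=
  hζ.continuous

lemma cont_z2 (hζ : Smooth3 ζ) (c : ℝ) : Continuous fun z : ℝ × ℝ => ζ z.1 z.2 c :=
  hζ.continuous.comp (continuous_fst.prodMk (continuous_snd.prodMk continuous_const))

lemma cont_pt2 (hζ : Smooth3 ζ) (c : ℝ) : Continuous fun z : ℝ × ℝ => pT ζ z.1 z.2 c :=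
  (pT_cont hζ).comp (continuous_fst.prodMk (continuous_snd.prodMk continuous_const))

/-- Derivative of the kinetic part of the energy. -/
lemma hasDerivAt_K (hζ : Smooth3 ζ) (s : ℝ) :
    HasDerivAt (fun τ => ∫ z, (ζ z.1 z.2 τ)^2 ∂(mSq L))
      (∫ z, 2 * ζ z.1 z.2 s * pT ζ z.1 z.2 s ∂(mSq L)) s := by
  have hg : Continuous fun p : ℝ × ℝ × ℝ => 2 * ζ p.1 p.2.1 p.2.2 * pT ζ p.1 p.2.1 p.2.2 :=
    (continuous_const.mul (cont_zt hζ)).mul (pT_cont hζ)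
  obtain ⟨C, hC⟩ := (isCompact_Icc.prod (isCompact_Icc.prod isCompact_Icc)
    : IsCompact (Icc 0 L ×ˢ (Icc 0 L ×ˢ Icc (s-1) (s+1)))).exists_bound_of_continuousOn
    hg.continuousOn
  refine (hasDerivAt_integral_of_dominated_loc_of_deriv_le (s := ball s 1)
    (F' := fun τ (z : ℝ × ℝ) => 2 * ζ z.1 z.2 τ * pT ζ z.1 z.2 τ) (ball_mem_nhds s zero_lt_one)
    (Filter.Eventually.of_forall fun τ => ((cont_z2 hζ τ).pow 2).aestronglyMeasurable)
    (integrable_cont2 ((cont_z2 hζ s).pow 2))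
    (((continuous_const.mul (cont_z2 hζ s)).mul (cont_pt2 hζ s)).aestronglyMeasurable)
    ?_ (integrable_const C) ?_).2
  · filter_upwards [ae_mSq L] with z hz
    intro τ hτ
    have hmem : (z.1, z.2, τ) ∈ Icc 0 L ×ˢ (Icc 0 L ×ˢ Icc (s-1) (s+1)) := by
      refine ⟨Ioo_subset_Icc_self hz.1, Ioo_subset_Icc_self hz.2, ?_⟩
      rw [mem_ball, Real.dist_eq, abs_lt] at hτ
      exact ⟨by linarith [hτ.1], by linarith [hτ.2]⟩
    exact hC _ hmem
  · filter_upwards with z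
    intro τ hτ
    simpa using (hasDerivAt_T hζ z.1 z.2 τ).fun_pow 2

/-- Derivative of the history part of the energy. -/
lemma hasDerivAt_D (hζ : Smooth3 ζ) (ha : Coeff a) (hh : 0 < h) (s : ℝ) :
    HasDerivAt (fun τ => ∫ w, a w.1.1 w.1.2 * (ζ w.1.1 w.1.2 (τ - w.2*h))^2 ∂(mCube L))
      (∫ w, a w.1.1 w.1.2 *
        (2 * ζ w.1.1 w.1.2 (s - w.2*h) * pT ζ w.1.1 w.1.2 (s - w.2*h)) ∂(mCube L)) s := by
  obtain ⟨M, hM⟩ := ha.2.2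
  have hg : Continuous fun p : ℝ × ℝ × ℝ => 2 * ζ p.1 p.2.1 p.2.2 * pT ζ p.1 p.2.1 p.2.2 :=
    (continuous_const.mul (cont_zt hζ)).mul (pT_cont hζ)
  obtain ⟨C, hC⟩ := (isCompact_Icc.prod (isCompact_Icc.prod isCompact_Icc)
    : IsCompact (Icc 0 L ×ˢ (Icc 0 L ×ˢ Icc (s-1-h) (s+1)))).exists_bound_of_continuousOn
    hg.continuousOn
  have hMnn : 0 ≤ M := le_trans (ha.2.1 0 0) (hM 0 0)
  have hcw : ∀ τ : ℝ, Continuous fun w : (ℝ × ℝ) × ℝ => (ζ w.1.1 w.1.2 (τ - w.2*h))^2 :=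
    fun τ => ((cont_zt hζ).comp (continuous_fst.fst.prodMk (continuous_fst.snd.prodMk
      (continuous_const.sub (continuous_snd.mul continuous_const))))).pow 2
  have hcw' : Continuous fun w : (ℝ × ℝ) × ℝ =>
      2 * ζ w.1.1 w.1.2 (s - w.2*h) * pT ζ w.1.1 w.1.2 (s - w.2*h) :=
    hg.comp (continuous_fst.fst.prodMk (continuous_fst.snd.prodMk
      (continuous_const.sub (continuous_snd.mul continuous_const))))
  refine (hasDerivAt_integral_of_dominated_loc_of_deriv_le (s := ball s 1)
    (F' := fun τ (w : (ℝ × ℝ) × ℝ) => a w.1.1 w.1.2 *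
      (2 * ζ w.1.1 w.1.2 (τ - w.2*h) * pT ζ w.1.1 w.1.2 (τ - w.2*h))) (ball_mem_nhds s zero_lt_one)
    (Filter.Eventually.of_forall fun τ =>
      ((ha.1.comp measurable_fst).aestronglyMeasurable.mul (hcw τ).aestronglyMeasurable))
    (integrable_a3 ha (hcw s))
    ((ha.1.comp measurable_fst).aestronglyMeasurable.mul hcw'.aestronglyMeasurable)
    ?_ (integrable_const (M * C)) ?_).2
  · filter_upwards [ae_mCube L] with w hw
    intro τ hτ
    rw [mem_ball, Real.dist_eq, abs_lt] at hτ
    have h1 : 0 < w.2 := hw.2.1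
    have h2 : w.2 ≤ 1 := hw.2.2
    have hlo : s - 1 - h ≤ τ - w.2*h := by nlinarith [hτ.1]
    have hhi : τ - w.2*h ≤ s + 1 := by nlinarith [hτ.2]
    have hmem : (w.1.1, w.1.2, τ - w.2*h) ∈ Icc 0 L ×ˢ (Icc 0 L ×ˢ Icc (s-1-h) (s+1)) :=
      ⟨Ioc_subset_Icc_self hw.1.1, Ioc_subset_Icc_self hw.1.2, hlo, hhi⟩
    have hb := hC _ hmem
    rw [Real.norm_eq_abs] at hb ⊢
    rw [abs_mul]
    have ha1 : |a w.1.1 w.1.2| ≤ M := by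
      rw [abs_of_nonneg (ha.2.1 _ _)]; exact hM _ _
    exact mul_le_mul ha1 hb (abs_nonneg _) hMnn
  · filter_upwards with w
    intro τ hτ
    have hc : HasDerivAt (fun τ : ℝ => τ - w.2*h) 1 τ := (hasDerivAt_id τ).sub_const _
    have hz := (hasDerivAt_T hζ w.1.1 w.1.2 (τ - w.2*h)).comp τ hc
    have h2 := ((hz.fun_pow 2).const_mul (a w.1.1 w.1.2))
    convert h2 using 1
    · rfl
    · rfl
    simp only [Function.comp_apply, pow_one]
    push_cast
    ring

/-- Evaluation of the `ρ`-integral in the derivative of the history part. -/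
lemma D'_eq (hζ : Smooth3 ζ) (ha : Coeff a) (hh : 0 < h) (s : ℝ) :
    (∫ w, a w.1.1 w.1.2 *
        (2 * ζ w.1.1 w.1.2 (s - w.2*h) * pT ζ w.1.1 w.1.2 (s - w.2*h)) ∂(mCube L))
      = (1/h) * ∫ z, a z.1 z.2 * ((ζ z.1 z.2 s)^2 - (ζ z.1 z.2 (s-h))^2) ∂(mSq L) := by
  have hg : Continuous fun p : ℝ × ℝ × ℝ => 2 * ζ p.1 p.2.1 p.2.2 * pT ζ p.1 p.2.1 p.2.2 :=
    (continuous_const.mul (cont_zt hζ)).mul (pT_cont hζ)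
  have hcw' : Continuous fun w : (ℝ × ℝ) × ℝ =>
      2 * ζ w.1.1 w.1.2 (s - w.2*h) * pT ζ w.1.1 w.1.2 (s - w.2*h) :=
    hg.comp (continuous_fst.fst.prodMk (continuous_fst.snd.prodMk
      (continuous_const.sub (continuous_snd.mul continuous_const))))
  have hint : Integrable (fun w : (ℝ × ℝ) × ℝ => a w.1.1 w.1.2 *
      (2 * ζ w.1.1 w.1.2 (s - w.2*h) * pT ζ w.1.1 w.1.2 (s - w.2*h))) (mCube L) :=
    integrable_a3 ha hcw'
  rw [show (∫ w, a w.1.1 w.1.2 *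
      (2 * ζ w.1.1 w.1.2 (s - w.2*h) * pT ζ w.1.1 w.1.2 (s - w.2*h)) ∂(mCube L))
      = ∫ z, (∫ ρ in Ioc (0:ℝ) 1, a z.1 z.2 *
        (2 * ζ z.1 z.2 (s - ρ*h) * pT ζ z.1 z.2 (s - ρ*h))) ∂(mSq L) from
    MeasureTheory.integral_prod _ hint]
  have hinner : ∀ z : ℝ × ℝ, (∫ ρ in Ioc (0:ℝ) 1, a z.1 z.2 *
      (2 * ζ z.1 z.2 (s - ρ*h) * pT ζ z.1 z.2 (s - ρ*h)))
      = (1/h) * (a z.1 z.2 * ((ζ z.1 z.2 s)^2 - (ζ z.1 z.2 (s-h))^2)) := by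
    intro z
    rw [← intervalIntegral.integral_of_le zero_le_one]
    have hder : ∀ ρ ∈ uIcc (0:ℝ) 1, HasDerivAt
        (fun ρ : ℝ => (-(1/h) * a z.1 z.2) * (ζ z.1 z.2 (s - ρ*h))^2)
        (a z.1 z.2 * (2 * ζ z.1 z.2 (s - ρ*h) * pT ζ z.1 z.2 (s - ρ*h))) ρ := by
      intro ρ _
      have hc : HasDerivAt (fun ρ : ℝ => s - ρ*h) (-(1*h)) ρ :=
        ((hasDerivAt_id ρ).mul_const h).const_sub s
      have hz := (hasDerivAt_T hζ z.1 z.2 (s - ρ*h)).comp ρ hc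
      have h2 := ((hz.fun_pow 2).const_mul (-(1/h) * a z.1 z.2))
      convert h2 using 1
      · rfl
      · rfl
      · rfl
      have hne : h ≠ 0 := ne_of_gt hh
      simp only [Function.comp_apply, pow_one]
      push_cast
      field_simp
    have hcont : Continuous fun ρ : ℝ => a z.1 z.2 *
        (2 * ζ z.1 z.2 (s - ρ*h) * pT ζ z.1 z.2 (s - ρ*h)) := by
      refine continuous_const.mul ((continuous_const.mul ?_).mul ?_)
      · exact (cont_zt hζ).comp (continuous_const.prodMk (continuous_const.prodMk
          (continuous_const.sub (continuous_id.mul continuous_const))))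
      · exact (pT_cont hζ).comp (continuous_const.prodMk (continuous_const.prodMk
          (continuous_const.sub (continuous_id.mul continuous_const))))
    rw [intervalIntegral.integral_eq_sub_of_hasDerivAt hder (hcont.intervalIntegrable 0 1)]
    have hne : h ≠ 0 := ne_of_gt hh
    simp only [one_mul, zero_mul, sub_zero]
    field_simp
    ring
  simp only [hinner]
  exact MeasureTheory.integral_const_mul _ _

end Param
/-- Energy monotonicity for the linear μ-system:
`E(t) ≤ E(0)` for all `t ≥ 0`. -/
theorem linear_mu_energy_monotone
    (L α γ h μ₁ μ₂ ξ : ℝ) (a : ℝ → ℝ → ℝ)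
    (hL : 0 < L) (hα : 0 < α) (hγ : 0 < γ) (hh : 0 < h)
    (hμ₂ : 0 < μ₂) (hμ : μ₂ < μ₁) (ha : Coeff a)
    (hξ₁ : h * μ₂ < ξ) (hξ₂ : ξ < h * (2*μ₁ - μ₂)) :
    ∀ ζ : ℝ → ℝ → ℝ → ℝ, IsLinMuSol L α γ h μ₁ μ₂ a ζ →
      ∀ t ≥ (0:ℝ),
        (1/2) * (∫ x in (0:ℝ)..L, ∫ y in (0:ℝ)..L, (ζ x y t)^2)
          + (ξ/2) * (∫ x in (0:ℝ)..L, ∫ y in (0:ℝ)..L, ∫ ρ in (0:ℝ)..1,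
              a x y * (ζ x y (t - ρ*h))^2)
        ≤ (1/2) * (∫ x in (0:ℝ)..L, ∫ y in (0:ℝ)..L, (ζ x y 0)^2)
          + (ξ/2) * (∫ x in (0:ℝ)..L, ∫ y in (0:ℝ)..L, ∫ ρ in (0:ℝ)..1,
              a x y * (ζ x y (-(ρ*h)))^2) := by
  intro ζ hsol t ht
  obtain ⟨hζ, hbc, hpde⟩ := hsol
  rcases eq_or_lt_of_le ht with heq | ht'
  · -- `t = 0`
    rw [← heq]
    simp only [zero_sub]
    exact le_refl _
  -- main case `t > 0`
  have hcw : ∀ c : ℝ, Continuous fun w : (ℝ × ℝ) × ℝ => (ζ w.1.1 w.1.2 (c - w.2*h))^2 :=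
    fun c => ((cont_zt hζ).comp (continuous_fst.fst.prodMk (continuous_fst.snd.prodMk
      (continuous_const.sub (continuous_snd.mul continuous_const))))).pow 2
  set K : ℝ → ℝ := fun s => ∫ z, (ζ z.1 z.2 s)^2 ∂(mSq L) with hK_def
  set D : ℝ → ℝ := fun s =>
    ∫ w, a w.1.1 w.1.2 * (ζ w.1.1 w.1.2 (s - w.2*h))^2 ∂(mCube L) with hD_def
  set E : ℝ → ℝ := fun s => (1/2) * K s + (ξ/2) * D s with hE_def
  -- conversions of the iterated integrals
  have hKconv : ∀ s : ℝ, (∫ x in (0:ℝ)..L, ∫ y in (0:ℝ)..L, (ζ x y s)^2) = K s := by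
    intro s
    exact integral_mSq hL (integrable_cont2 ((cont_z2 hζ s).pow 2))
  have hDconv : ∀ s : ℝ,
      (∫ x in (0:ℝ)..L, ∫ y in (0:ℝ)..L, ∫ ρ in (0:ℝ)..1, a x y * (ζ x y (s - ρ*h))^2)
        = D s := by
    intro s
    exact integral_mCube hL (integrable_a3 ha (hcw s))
  have h0conv :
      (∫ x in (0:ℝ)..L, ∫ y in (0:ℝ)..L, ∫ ρ in (0:ℝ)..1, a x y * (ζ x y (-(ρ*h)))^2)
        = D 0 := by
    have h1 := hDconv 0
    simp only [zero_sub] at h1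
    exact h1
  -- derivative of the energy
  have hK' : ∀ s : ℝ, HasDerivAt K (∫ z, 2 * ζ z.1 z.2 s * pT ζ z.1 z.2 s ∂(mSq L)) s :=
    fun s => hasDerivAt_K hζ s
  have hD' : ∀ s : ℝ, HasDerivAt D
      ((1/h) * ∫ z, a z.1 z.2 * ((ζ z.1 z.2 s)^2 - (ζ z.1 z.2 (s-h))^2) ∂(mSq L)) s :=
    fun s => (D'_eq hζ ha hh s) ▸ hasDerivAt_D hζ ha hh s
  have hE' : ∀ s : ℝ, HasDerivAt E
      ((1/2) * (∫ z, 2 * ζ z.1 z.2 s * pT ζ z.1 z.2 s ∂(mSq L))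
        + (ξ/2) * ((1/h) * ∫ z, a z.1 z.2 * ((ζ z.1 z.2 s)^2 - (ζ z.1 z.2 (s-h))^2) ∂(mSq L))) s :=
    fun s => ((hK' s).const_mul (1/2)).add ((hD' s).const_mul (ξ/2))
  -- nonpositivity of the derivative on positive times
  have hneg : ∀ s : ℝ, 0 < s →
      (1/2) * (∫ z, 2 * ζ z.1 z.2 s * pT ζ z.1 z.2 s ∂(mSq L))
        + (ξ/2) * ((1/h) * ∫ z, a z.1 z.2 * ((ζ z.1 z.2 s)^2 - (ζ z.1 z.2 (s-h))^2) ∂(mSq L))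
      ≤ 0 := by
    intro s hs
    have hsl : ContDiff ℝ (⊤ : ℕ∞) (sliceT ζ s) := contDiff_sliceT hζ s
    have hc3x : Continuous fun z : ℝ × ℝ => Dv vx (Dv vx (Dv vx (sliceT ζ s))) (z.1, z.2) :=
      (Dv_continuous (Dv_contDiff (Dv_contDiff hsl vx) vx) vx).comp
        (continuous_fst.prodMk continuous_snd)
    have hc3y : Continuous fun z : ℝ × ℝ => Dv vx (Dv vy (Dv vy (sliceT ζ s))) (z.1, z.2) :=
      (Dv_continuous (Dv_contDiff (Dv_contDiff hsl vy) vy) vx).comp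
        (continuous_fst.prodMk continuous_snd)
    have hF1 : Integrable (fun z : ℝ × ℝ => ζ z.1 z.2 s *
        (α * Dv vx (Dv vx (Dv vx (sliceT ζ s))) (z.1, z.2)
          + γ * Dv vx (Dv vy (Dv vy (sliceT ζ s))) (z.1, z.2))) (mSq L) :=
      integrable_cont2 ((cont_z2 hζ s).mul
        ((continuous_const.mul hc3x).add (continuous_const.mul hc3y)))
    have hF2 : Integrable (fun z : ℝ × ℝ => a z.1 z.2 *
        (μ₁ * (ζ z.1 z.2 s * ζ z.1 z.2 s) + μ₂ * (ζ z.1 z.2 s * ζ z.1 z.2 (s-h)))) (mSq L) :=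
      integrable_a2 ha ((continuous_const.mul ((cont_z2 hζ s).mul (cont_z2 hζ s))).add
        (continuous_const.mul ((cont_z2 hζ s).mul (cont_z2 hζ (s-h)))))
    have hF3 : Integrable (fun z : ℝ × ℝ =>
        a z.1 z.2 * ((ζ z.1 z.2 s)^2 - (ζ z.1 z.2 (s-h))^2)) (mSq L) :=
      integrable_a2 ha (((cont_z2 hζ s).pow 2).sub ((cont_z2 hζ (s-h)).pow 2))
    set I1 := ∫ z, (ζ z.1 z.2 s *
        (α * Dv vx (Dv vx (Dv vx (sliceT ζ s))) (z.1, z.2)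
          + γ * Dv vx (Dv vy (Dv vy (sliceT ζ s))) (z.1, z.2))) ∂(mSq L) with hI1_def
    set B := ∫ z, (a z.1 z.2 *
        (μ₁ * (ζ z.1 z.2 s * ζ z.1 z.2 s) + μ₂ * (ζ z.1 z.2 s * ζ z.1 z.2 (s-h)))) ∂(mSq L)
      with hB_def
    set B2 := ∫ z, (a z.1 z.2 * ((ζ z.1 z.2 s)^2 - (ζ z.1 z.2 (s-h))^2)) ∂(mSq L) with hB2_def
    -- use the PDE
    have hpde' : ∀ᵐ z ∂(mSq L), 2 * ζ z.1 z.2 s * pT ζ z.1 z.2 s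
        = 2 * (-(ζ z.1 z.2 s * (α * Dv vx (Dv vx (Dv vx (sliceT ζ s))) (z.1, z.2)
            + γ * Dv vx (Dv vy (Dv vy (sliceT ζ s))) (z.1, z.2)))
          - a z.1 z.2 * (μ₁ * (ζ z.1 z.2 s * ζ z.1 z.2 s)
            + μ₂ * (ζ z.1 z.2 s * ζ z.1 z.2 (s-h)))) := by
      filter_upwards [ae_mSq L] with z hz
      have hp := hpde z.1 hz.1 z.2 hz.2 s hs
      simp only [] at hp
      rw [pX3_eq hζ, pXYY_eq hζ] at hp
      have hp2 : pT ζ z.1 z.2 s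
          = -(α * Dv vx (Dv vx (Dv vx (sliceT ζ s))) (z.1, z.2)
              + γ * Dv vx (Dv vy (Dv vy (sliceT ζ s))) (z.1, z.2))
            - a z.1 z.2 * (μ₁ * ζ z.1 z.2 s + μ₂ * ζ z.1 z.2 (s-h)) := by linarith
      rw [hp2]; ring
    have hF1n : Integrable (fun z : ℝ × ℝ => -(ζ z.1 z.2 s *
        (α * Dv vx (Dv vx (Dv vx (sliceT ζ s))) (z.1, z.2)
          + γ * Dv vx (Dv vy (Dv vy (sliceT ζ s))) (z.1, z.2)))) (mSq L) := hF1.neg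
    have hKs : (∫ z, 2 * ζ z.1 z.2 s * pT ζ z.1 z.2 s ∂(mSq L)) = 2 * (-I1 - B) := by
      rw [MeasureTheory.integral_congr_ae hpde', MeasureTheory.integral_const_mul,
        MeasureTheory.integral_sub hF1n hF2, MeasureTheory.integral_neg]
    have hI1 : 0 ≤ I1 := I1_nonneg hζ hbc hL hα hγ hs
    -- the quadratic-form estimate
    have hc1 : μ₂/2 < ξ/(2*h) := by
      rw [div_lt_div_iff₀ two_pos (by positivity)]
      nlinarith
    have hc2 : ξ/(2*h) < μ₁ - μ₂/2 := by
      rw [div_lt_iff₀ (by positivity)]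
      nlinarith
    have hA : 0 < μ₁ - ξ/(2*h) := by linarith
    have h4AC : μ₂^2 ≤ 4*((μ₁ - ξ/(2*h)) * (ξ/(2*h))) := by
      have e1 : 0 < ξ/(2*h) - μ₂/2 := by linarith
      have e2 : 0 < (μ₁ - ξ/(2*h)) - μ₂/2 := by linarith
      nlinarith [mul_pos e1 e2, mul_nonneg e1.le hμ₂.le, mul_nonneg e2.le hμ₂.le]
    have hcomb : 0 ≤ B - (ξ/(2*h)) * B2 := by
      rw [hB_def, hB2_def, ← MeasureTheory.integral_const_mul,
        ← MeasureTheory.integral_sub hF2 (hF3.const_mul _)]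
      apply MeasureTheory.integral_nonneg_of_ae
      filter_upwards with z
      have hq := quad_nonneg (A := μ₁ - ξ/(2*h)) (C := ξ/(2*h)) (B := μ₂)
        (z := ζ z.1 z.2 s) (w := ζ z.1 z.2 (s-h)) hA h4AC
      have hrw : a z.1 z.2 * (μ₁ * (ζ z.1 z.2 s * ζ z.1 z.2 s)
            + μ₂ * (ζ z.1 z.2 s * ζ z.1 z.2 (s-h)))
          - ξ/(2*h) * (a z.1 z.2 * ((ζ z.1 z.2 s)^2 - (ζ z.1 z.2 (s-h))^2))
          = a z.1 z.2 * ((μ₁ - ξ/(2*h)) * (ζ z.1 z.2 s)^2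
            + μ₂ * (ζ z.1 z.2 s * ζ z.1 z.2 (s-h)) + (ξ/(2*h)) * (ζ z.1 z.2 (s-h))^2) := by
        ring
      simp only [Pi.zero_apply]
      rw [hrw]
      exact mul_nonneg (ha.2.1 _ _) hq
    rw [hKs]
    have hfin : (1/2) * (2 * (-I1 - B)) + (ξ/2) * ((1/h) * B2)
        = -I1 - (B - (ξ/(2*h)) * B2) := by
      field_simp
      ring
    rw [hfin]
    linarith
  -- conclude by monotonicity
  have hanti : AntitoneOn E (Icc 0 t) := by
    apply antitoneOn_of_deriv_nonpos (convex_Icc 0 t)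
    · exact fun s _ => (hE' s).continuousAt.continuousWithinAt
    · intro s hs
      exact ((hE' s).differentiableAt).differentiableWithinAt
    · intro s hs
      rw [interior_Icc] at hs
      rw [(hE' s).deriv]
      exact hneg s hs.1
  have hfinal : E t ≤ E 0 :=
    hanti (left_mem_Icc.2 ht) (right_mem_Icc.2 ht) ht
  rw [hKconv t, hDconv t, hKconv 0, h0conv]
  exact hfinal
end
end

section
/- Every classical solution ζ of the (nonlinear) μ-system satisfies the a priori bound ∫_Ω ζ(x,y,t)² dx dy + ξ‖a‖_∞ ∫_Ω∫₀¹ ζ(x,y,t−ρh)² dρ dx dy ≤ e^{(ξ‖a‖_∞/h) t} ( ∫_Ω ζ₀² dx dy + ξ‖a‖_∞ ∫_Ω∫₀¹ z₀² dρ dx dy ) for all t ≥ 0, i.e. ‖(ζ(·,·,t), ζ(·,·,t−h·))‖²_H ≤ e^{(ξ‖a‖_∞/h) t} ‖(ζ₀,z₀)‖²_H. -/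
open MeasureTheory intervalIntegral Set

noncomputable section

set_option maxHeartbeats 1000000

namespace MuAux
open Function


abbrev E3 := ℝ × ℝ × ℝ

def Dd (v : E3) (f : E3 → ℝ) : E3 → ℝ := fun p => fderiv ℝ f p v

lemma Dd_contDiff {f : E3 → ℝ} (hf : ContDiff ℝ (⊤ : ℕ∞) f) (v : E3) : ContDiff ℝ (⊤ : ℕ∞) (Dd v f) := by
  have h1 : ContDiff ℝ (⊤ : ℕ∞) (fderiv ℝ f) := hf.fderiv_right (by simp)
  exact (ContinuousLinearMap.apply ℝ ℝ v).contDiff.comp h1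

lemma Dd_cont {f : E3 → ℝ} (hf : ContDiff ℝ (⊤ : ℕ∞) f) (v : E3) : Continuous (Dd v f) :=
  (Dd_contDiff hf v).continuous

lemma hasDerivAt_sliceX {f : E3 → ℝ} (hf : ContDiff ℝ (⊤ : ℕ∞) f) (x y t : ℝ) :
    HasDerivAt (fun s => f (s, y, t)) (Dd (1,0,0) f (x,y,t)) x := by
  have hF := (hf.differentiable (by simp) (x,y,t)).hasFDerivAt
  have hc : HasDerivAt (fun s : ℝ => ((s, y, t) : E3)) (1, 0, 0) x :=
    HasDerivAt.prodMk (hasDerivAt_id x) (HasDerivAt.prodMk (hasDerivAt_const x y) (hasDerivAt_const x t))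
  exact hF.comp_hasDerivAt x hc

lemma hasDerivAt_sliceY {f : E3 → ℝ} (hf : ContDiff ℝ (⊤ : ℕ∞) f) (x y t : ℝ) :
    HasDerivAt (fun r => f (x, r, t)) (Dd (0,1,0) f (x,y,t)) y := by
  have hF := (hf.differentiable (by simp) (x,y,t)).hasFDerivAt
  have hc : HasDerivAt (fun r : ℝ => ((x, r, t) : E3)) (0, 1, 0) y :=
    HasDerivAt.prodMk (hasDerivAt_const y x) (HasDerivAt.prodMk (hasDerivAt_id y) (hasDerivAt_const y t))
  exact hF.comp_hasDerivAt y hc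

lemma hasDerivAt_sliceT {f : E3 → ℝ} (hf : ContDiff ℝ (⊤ : ℕ∞) f) (x y t : ℝ) :
    HasDerivAt (fun τ => f (x, y, τ)) (Dd (0,0,1) f (x,y,t)) t := by
  have hF := (hf.differentiable (by simp) (x,y,t)).hasFDerivAt
  have hc : HasDerivAt (fun τ : ℝ => ((x, y, τ) : E3)) (0, 0, 1) t :=
    HasDerivAt.prodMk (hasDerivAt_const t x) (HasDerivAt.prodMk (hasDerivAt_const t y) (hasDerivAt_id t))
  exact hF.comp_hasDerivAt t hc

lemma derivX_eq {f : E3 → ℝ} (hf : ContDiff ℝ (⊤ : ℕ∞) f) (x y t : ℝ) :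
    deriv (fun s => f (s, y, t)) x = Dd (1,0,0) f (x,y,t) :=
  (hasDerivAt_sliceX hf x y t).deriv

lemma derivY_eq {f : E3 → ℝ} (hf : ContDiff ℝ (⊤ : ℕ∞) f) (x y t : ℝ) :
    deriv (fun r => f (x, r, t)) y = Dd (0,1,0) f (x,y,t) :=
  (hasDerivAt_sliceY hf x y t).deriv

lemma derivT_eq {f : E3 → ℝ} (hf : ContDiff ℝ (⊤ : ℕ∞) f) (x y t : ℝ) :
    deriv (fun τ => f (x, y, τ)) t = Dd (0,0,1) f (x,y,t) :=
  (hasDerivAt_sliceT hf x y t).deriv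

lemma Dd_comm {f : E3 → ℝ} (hf : ContDiff ℝ (⊤ : ℕ∞) f) (v w : E3) (p : E3) :
    Dd v (Dd w f) p = Dd w (Dd v f) p := by
  have hdf : ∀ q, HasFDerivAt f (fderiv ℝ f q) q := fun q =>
    (hf.differentiable (by simp) q).hasFDerivAt
  have hf' : ContDiff ℝ (⊤ : ℕ∞) (fderiv ℝ f) := hf.fderiv_right (by simp)
  have h2 : HasFDerivAt (fderiv ℝ f) (fderiv ℝ (fderiv ℝ f) p) p :=
    (hf'.differentiable (by simp) p).hasFDerivAt
  have key : ∀ v w : E3, Dd v (Dd w f) p = (fderiv ℝ (fderiv ℝ f) p v) w := by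
    intro v w
    have hcomp : HasFDerivAt (Dd w f)
        (((ContinuousLinearMap.apply ℝ ℝ w)).comp (fderiv ℝ (fderiv ℝ f) p)) p :=
      ((ContinuousLinearMap.apply ℝ ℝ w).hasFDerivAt).comp p h2
    simp [Dd, hcomp.fderiv]
  rw [key, key]
  exact second_derivative_symmetric hdf h2 v w

lemma deriv_eq_zero_of_eqOn {u : ℝ → ℝ} {s : Set ℝ} {x : ℝ} (hs : IsOpen s) (hx : x ∈ s)
    (h0 : ∀ z ∈ s, u z = 0) : deriv u x = 0 := by
  have h : u =ᶠ[nhds x] (fun _ => (0:ℝ)) := by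
    filter_upwards [hs.mem_nhds hx] with z hz using h0 z hz
  rw [h.deriv_eq]
  simp




/-- Fubini swap for continuous integrands, ordered case. -/
lemma swap_le {f : ℝ → ℝ → ℝ} (hf : Continuous fun p : ℝ × ℝ => f p.1 p.2)
    {a b c d : ℝ} (hab : a ≤ b) (hcd : c ≤ d) :
    ∫ x in a..b, ∫ y in c..d, f x y = ∫ y in c..d, ∫ x in a..b, f x y := by
  have hint : Integrable (uncurry f)
      ((volume.restrict (Ioc a b)).prod (volume.restrict (Ioc c d))) := by
    rw [Measure.prod_restrict]
    have : IntegrableOn (uncurry f) (Icc a b ×ˢ Icc c d) volume :=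
      hf.continuousOn.integrableOn_compact ((isCompact_Icc).prod isCompact_Icc)
    have h2 := this.mono_set (prod_mono Ioc_subset_Icc_self Ioc_subset_Icc_self)
    rwa [IntegrableOn, Measure.volume_eq_prod] at h2
  rw [integral_of_le hab, integral_of_le hcd]
  simp_rw [integral_of_le hcd, integral_of_le hab]
  exact integral_integral_swap hint


abbrev E3' := ℝ × ℝ × ℝ

/-- continuity of a parametric interval integral, explicit form. -/
lemma cont_param {f : ℝ → ℝ → ℝ} (hf : Continuous fun p : ℝ × ℝ => f p.1 p.2) (c d : ℝ) :
    Continuous fun x => ∫ y in c..d, f x y :=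
  continuous_parametric_intervalIntegral_of_continuous' (μ := volume) (f := f) hf c d

/-- continuity in (x,t) of ∫ y of a 3-variable continuous function. -/
lemma cont_param2 {F : ℝ → ℝ → ℝ → ℝ}
    (hF : Continuous fun p : E3' => F p.1 p.2.1 p.2.2) (c d : ℝ) :
    Continuous fun q : ℝ × ℝ => ∫ y in c..d, F q.1 y q.2 := by
  refine continuous_parametric_intervalIntegral_of_continuous' (μ := volume)
    (f := fun q : ℝ × ℝ => fun y => F q.1 y q.2) ?_ c d
  exact hF.comp (by fun_prop : Continuous fun p : (ℝ × ℝ) × ℝ => (p.1.1, p.2, p.1.2))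

/-- continuity in t of the double integral. -/
lemma cont_dbl {F : ℝ → ℝ → ℝ → ℝ}
    (hF : Continuous fun p : E3' => F p.1 p.2.1 p.2.2) (c d c' d' : ℝ) :
    Continuous fun t : ℝ => ∫ x in c..d, ∫ y in c'..d', F x y t := by
  refine continuous_parametric_intervalIntegral_of_continuous' (μ := volume)
    (f := fun t x => ∫ y in c'..d', F x y t) ?_ c d
  have := cont_param2 hF c' d'
  exact this.comp (by fun_prop : Continuous fun p : ℝ × ℝ => (p.2, p.1))

/-- FTC identity for double integrals of smooth-in-time integrands. -/
lemma dblInt_identity {L : ℝ} (hL : 0 ≤ L) {g gt : ℝ → ℝ → ℝ → ℝ}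
    (hg : Continuous fun p : E3' => g p.1 p.2.1 p.2.2)
    (hgt : Continuous fun p : E3' => gt p.1 p.2.1 p.2.2)
    (hd : ∀ x y t, HasDerivAt (g x y) (gt x y t) t) {t : ℝ} (ht : 0 ≤ t) :
    (∫ x in (0:ℝ)..L, ∫ y in (0:ℝ)..L, g x y t)
      = (∫ x in (0:ℝ)..L, ∫ y in (0:ℝ)..L, g x y 0)
        + ∫ s in (0:ℝ)..t, ∫ x in (0:ℝ)..L, ∫ y in (0:ℝ)..L, gt x y s := by
  have hgc : ∀ x y, Continuous (g x y) := fun x y =>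
    hg.comp (by fun_prop : Continuous fun τ : ℝ => ((x,y,τ) : E3'))
  have hgtc : ∀ x y, Continuous (gt x y) := fun x y =>
    hgt.comp (by fun_prop : Continuous fun τ : ℝ => ((x,y,τ) : E3'))
  have hpt : ∀ x y, g x y t - g x y 0 = ∫ s in (0:ℝ)..t, gt x y s := by
    intro x y
    rw [integral_eq_sub_of_hasDerivAt (fun s _ => hd x y s) ((hgtc x y).intervalIntegrable 0 t)]
  -- step: inner integrals
  have hxslice : ∀ (τ : ℝ) (x : ℝ), Continuous fun y => g x y τ := fun τ x =>
    hg.comp (by fun_prop : Continuous fun y : ℝ => ((x,y,τ) : E3'))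
  have step1 : ∀ x : ℝ,
      (∫ y in (0:ℝ)..L, g x y t) - (∫ y in (0:ℝ)..L, g x y 0)
        = ∫ y in (0:ℝ)..L, ∫ s in (0:ℝ)..t, gt x y s := by
    intro x
    rw [← integral_sub ((hxslice t x).intervalIntegrable 0 L)
      ((hxslice 0 x).intervalIntegrable 0 L)]
    exact integral_congr fun y _ => hpt x y
  have contx : ∀ τ : ℝ, Continuous fun x => ∫ y in (0:ℝ)..L, g x y τ := by
    intro τ
    exact cont_param (f := fun x y => g x y τ)
      (hg.comp (by fun_prop : Continuous fun p : ℝ × ℝ => ((p.1, p.2, τ) : E3'))) 0 L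
  have step2 : (∫ x in (0:ℝ)..L, ∫ y in (0:ℝ)..L, g x y t)
      - (∫ x in (0:ℝ)..L, ∫ y in (0:ℝ)..L, g x y 0)
      = ∫ x in (0:ℝ)..L, ∫ y in (0:ℝ)..L, ∫ s in (0:ℝ)..t, gt x y s := by
    rw [← integral_sub ((contx t).intervalIntegrable 0 L) ((contx 0).intervalIntegrable 0 L)]
    exact integral_congr fun x _ => step1 x
  -- step: swap s out
  have swap1 : ∀ x : ℝ, (∫ y in (0:ℝ)..L, ∫ s in (0:ℝ)..t, gt x y s)
      = ∫ s in (0:ℝ)..t, ∫ y in (0:ℝ)..L, gt x y s := by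
    intro x
    exact swap_le (f := fun y s => gt x y s)
      (hgt.comp (by fun_prop : Continuous fun p : ℝ × ℝ => ((x, p.1, p.2) : E3'))) hL ht
  have swap2 : (∫ x in (0:ℝ)..L, ∫ s in (0:ℝ)..t, ∫ y in (0:ℝ)..L, gt x y s)
      = ∫ s in (0:ℝ)..t, ∫ x in (0:ℝ)..L, ∫ y in (0:ℝ)..L, gt x y s := by
    refine swap_le (f := fun x s => ∫ y in (0:ℝ)..L, gt x y s) ?_ hL ht
    exact cont_param2 hgt 0 L
  have : (∫ x in (0:ℝ)..L, ∫ y in (0:ℝ)..L, ∫ s in (0:ℝ)..t, gt x y s)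
      = ∫ x in (0:ℝ)..L, ∫ s in (0:ℝ)..t, ∫ y in (0:ℝ)..L, gt x y s :=
    integral_congr fun x _ => swap1 x
  have key := step2.trans (this.trans swap2)
  linarith [key]

/-- derivative in the parameter of a double integral -/
lemma hasDerivAt_dbl {L : ℝ} (hL : 0 ≤ L) {g gt : ℝ → ℝ → ℝ → ℝ}
    (hg : Continuous fun p : E3' => g p.1 p.2.1 p.2.2)
    (hgt : Continuous fun p : E3' => gt p.1 p.2.1 p.2.2)
    (hd : ∀ x y t, HasDerivAt (g x y) (gt x y t) t) {t : ℝ} (ht : 0 < t) :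
    HasDerivAt (fun τ => ∫ x in (0:ℝ)..L, ∫ y in (0:ℝ)..L, g x y τ)
      (∫ x in (0:ℝ)..L, ∫ y in (0:ℝ)..L, gt x y t) t := by
  set Ψ : ℝ → ℝ := fun s => ∫ x in (0:ℝ)..L, ∫ y in (0:ℝ)..L, gt x y s with hΨdef
  have hΨ : Continuous Ψ := cont_dbl hgt 0 L 0 L
  have hprim : HasDerivAt
      (fun u => (∫ x in (0:ℝ)..L, ∫ y in (0:ℝ)..L, g x y 0) + ∫ s in (0:ℝ)..u, Ψ s) (Ψ t) t :=
    ((hΨ.integral_hasStrictDerivAt 0 t).hasDerivAt).const_add _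
  refine HasDerivAt.congr_of_eventuallyEq hprim ?_
  filter_upwards [isOpen_Ioi.mem_nhds ht] with τ hτ
  exact dblInt_identity hL hg hgt hd (le_of_lt hτ)

lemma ae_restrict_Ioo_of_Ioc {a b : ℝ} {P : ℝ → Prop}
    (h : ∀ᵐ x ∂(volume.restrict (Ioo a b)), P x) :
    ∀ᵐ x ∂(volume.restrict (Ioc a b)), P x := by
  rwa [Measure.restrict_congr_set Ioo_ae_eq_Ioc] at h

/-- monotonicity of interval integrals from a.e. inequality on the open interval -/
lemma intIneq {a b : ℝ} {u v : ℝ → ℝ} (hab : a ≤ b) (hu : Continuous u) (hv : Continuous v)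
    (h : ∀ᵐ x ∂(volume.restrict (Ioo a b)), u x ≤ v x) :
    (∫ x in a..b, u x) ≤ ∫ x in a..b, v x := by
  rw [integral_of_le hab, integral_of_le hab]
  refine setIntegral_mono_ae_restrict ?_ ?_ (ae_restrict_Ioo_of_Ioc h)
  · exact (hu.continuousOn.integrableOn_compact isCompact_Icc).mono_set Ioc_subset_Icc_self
  · exact (hv.continuousOn.integrableOn_compact isCompact_Icc).mono_set Ioc_subset_Icc_self

/-- interval integral congruence from equality on the open interval -/
lemma intCongr {a b : ℝ} {u v : ℝ → ℝ} (hab : a ≤ b) (h : ∀ x ∈ Ioo a b, u x = v x) :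
    (∫ x in a..b, u x) = ∫ x in a..b, v x := by
  apply intervalIntegral.integral_congr_ae
  have hb : ∀ᵐ x : ℝ, x ≠ a ∧ x ≠ b := by
    have ha' : ∀ᵐ x : ℝ, x ≠ a := by
      rw [ae_iff]; simpa using Real.volume_singleton
    have hb' : ∀ᵐ x : ℝ, x ≠ b := by
      rw [ae_iff]; simpa using Real.volume_singleton
    exact ha'.and hb'
  filter_upwards [hb] with x hx hmem
  rw [uIoc_of_le hab] at hmem
  exact h x ⟨hmem.1, lt_of_le_of_ne hmem.2 hx.2⟩

/-- monotonicity for double integrals, from a.e. inequality on the open box. -/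
lemma dbl_mono {L : ℝ} (hL : 0 ≤ L) {f g : ℝ → ℝ → ℝ}
    (hf : Continuous fun p : ℝ × ℝ => f p.1 p.2) (hg : Continuous fun p : ℝ × ℝ => g p.1 p.2)
    (h : ∀ᵐ x ∂(volume.restrict (Ioo (0:ℝ) L)),
      ∀ᵐ y ∂(volume.restrict (Ioo (0:ℝ) L)), f x y ≤ g x y) :
    (∫ x in (0:ℝ)..L, ∫ y in (0:ℝ)..L, f x y) ≤ ∫ x in (0:ℝ)..L, ∫ y in (0:ℝ)..L, g x y := by
  refine intIneq hL (cont_param hf 0 L) (cont_param hg 0 L) ?_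
  filter_upwards [h] with x hx
  refine intIneq hL ?_ ?_ hx
  · exact hf.comp (by fun_prop : Continuous fun y : ℝ => ((x, y) : ℝ × ℝ))
  · exact hg.comp (by fun_prop : Continuous fun y : ℝ => ((x, y) : ℝ × ℝ))

/-- additivity of double integrals of continuous functions -/
lemma dbl_add {L : ℝ} {f g : ℝ → ℝ → ℝ}
    (hf : Continuous fun p : ℝ × ℝ => f p.1 p.2) (hg : Continuous fun p : ℝ × ℝ => g p.1 p.2) :
    (∫ x in (0:ℝ)..L, ∫ y in (0:ℝ)..L, (f x y + g x y))
      = (∫ x in (0:ℝ)..L, ∫ y in (0:ℝ)..L, f x y) + ∫ x in (0:ℝ)..L, ∫ y in (0:ℝ)..L, g x y := by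
  have h1 : ∀ x : ℝ, (∫ y in (0:ℝ)..L, (f x y + g x y))
      = (∫ y in (0:ℝ)..L, f x y) + ∫ y in (0:ℝ)..L, g x y := by
    intro x
    exact integral_add
      ((hf.comp (by fun_prop : Continuous fun y : ℝ => ((x, y) : ℝ × ℝ))).intervalIntegrable 0 L)
      ((hg.comp (by fun_prop : Continuous fun y : ℝ => ((x, y) : ℝ × ℝ))).intervalIntegrable 0 L)
  rw [integral_congr (fun x _ => h1 x)]
  exact integral_add ((cont_param hf 0 L).intervalIntegrable 0 L)
    ((cont_param hg 0 L).intervalIntegrable 0 L)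

/-- subtraction for double integrals of continuous functions -/
lemma dbl_sub {L : ℝ} {f g : ℝ → ℝ → ℝ}
    (hf : Continuous fun p : ℝ × ℝ => f p.1 p.2) (hg : Continuous fun p : ℝ × ℝ => g p.1 p.2) :
    (∫ x in (0:ℝ)..L, ∫ y in (0:ℝ)..L, (f x y - g x y))
      = (∫ x in (0:ℝ)..L, ∫ y in (0:ℝ)..L, f x y) - ∫ x in (0:ℝ)..L, ∫ y in (0:ℝ)..L, g x y := by
  have h1 : ∀ x : ℝ, (∫ y in (0:ℝ)..L, (f x y - g x y))
      = (∫ y in (0:ℝ)..L, f x y) - ∫ y in (0:ℝ)..L, g x y := by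
    intro x
    exact integral_sub
      ((hf.comp (by fun_prop : Continuous fun y : ℝ => ((x, y) : ℝ × ℝ))).intervalIntegrable 0 L)
      ((hg.comp (by fun_prop : Continuous fun y : ℝ => ((x, y) : ℝ × ℝ))).intervalIntegrable 0 L)
  rw [integral_congr (fun x _ => h1 x)]
  exact integral_sub ((cont_param hf 0 L).intervalIntegrable 0 L)
    ((cont_param hg 0 L).intervalIntegrable 0 L)

lemma dbl_const_mul {L c : ℝ} (f : ℝ → ℝ → ℝ) :
    (∫ x in (0:ℝ)..L, ∫ y in (0:ℝ)..L, c * f x y)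
      = c * ∫ x in (0:ℝ)..L, ∫ y in (0:ℝ)..L, f x y := by
  simp_rw [intervalIntegral.integral_const_mul]

abbrev e1 : E3 := (1,0,0)
abbrev e2 : E3 := (0,1,0)
abbrev e3 : E3 := (0,0,1)

lemma cAt {g : E3 → ℝ} (hg : Continuous g) (t : ℝ) :
    Continuous fun p : ℝ × ℝ => g (p.1, p.2, t) :=
  hg.comp (by fun_prop)

lemma intNonneg {a b : ℝ} (hab : a ≤ b) {v : ℝ → ℝ} (hv : Continuous v)
    (h : ∀ x ∈ Ioo a b, 0 ≤ v x) : 0 ≤ ∫ x in a..b, v x := by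
  have h2 : ∀ᵐ x ∂(volume.restrict (Ioo a b)), (0:ℝ) ≤ v x := by
    filter_upwards [ae_restrict_mem measurableSet_Ioo] with x hx using h x hx
  simpa using intIneq hab continuous_const hv h2

section IBP
variable {f : E3 → ℝ} {L t : ℝ}

/-- inner IBP for the third-derivative term -/
lemma I3_inner (hf : ContDiff ℝ (⊤ : ℕ∞) f) (hL : 0 ≤ L) {y : ℝ}
    (h0 : f (0,y,t) = 0) (h1 : f (L,y,t) = 0) (h2 : Dd e1 f (L,y,t) = 0) :
    ∫ x in (0:ℝ)..L, f (x,y,t) * Dd e1 (Dd e1 (Dd e1 f)) (x,y,t)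
      = (Dd e1 f (0,y,t))^2 / 2 := by
  have hf1 := Dd_contDiff hf e1
  have hf2 := Dd_contDiff hf1 e1
  have hφ : ∀ x : ℝ, HasDerivAt
      (fun x => f (x,y,t) * Dd e1 (Dd e1 f) (x,y,t) - (Dd e1 f (x,y,t))^2/2)
      (f (x,y,t) * Dd e1 (Dd e1 (Dd e1 f)) (x,y,t)) x := by
    intro x
    have d0 := hasDerivAt_sliceX hf x y t
    have d1 := hasDerivAt_sliceX hf1 x y t
    have d2 := hasDerivAt_sliceX hf2 x y t
    have h := ((d0.mul d2).sub (((d1.pow 2)).div_const 2))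
    refine h.congr_deriv ?_
    push_cast
    ring
  have hcont : Continuous fun x : ℝ => f (x,y,t) * Dd e1 (Dd e1 (Dd e1 f)) (x,y,t) := by
    exact ((hf.continuous.comp (by fun_prop)).mul ((Dd_cont hf2 e1).comp (by fun_prop)))
  rw [integral_eq_sub_of_hasDerivAt (fun x _ => hφ x) (hcont.intervalIntegrable 0 L)]
  rw [h0, h1, h2]
  ring

/-- the third-derivative double integral is nonnegative -/
lemma I3_nonneg (hf : ContDiff ℝ (⊤ : ℕ∞) f) (hL : 0 ≤ L)
    (hbc : ∀ y ∈ Ioo (0:ℝ) L, f (0,y,t) = 0 ∧ f (L,y,t) = 0 ∧ Dd e1 f (L,y,t) = 0) :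
    0 ≤ ∫ x in (0:ℝ)..L, ∫ y in (0:ℝ)..L, f (x,y,t) * Dd e1 (Dd e1 (Dd e1 f)) (x,y,t) := by
  have hf3 := Dd_contDiff (Dd_contDiff (Dd_contDiff hf e1) e1) e1
  have hcont : Continuous fun p : ℝ × ℝ => f (p.1,p.2,t) * Dd e1 (Dd e1 (Dd e1 f)) (p.1,p.2,t) :=
    (cAt hf.continuous t).mul (cAt hf3.continuous t)
  rw [swap_le (f := fun x y => f (x,y,t) * Dd e1 (Dd e1 (Dd e1 f)) (x,y,t)) hcont hL hL]
  refine intNonneg hL ?_ ?_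
  · exact cont_param (f := fun y x => f (x,y,t) * Dd e1 (Dd e1 (Dd e1 f)) (x,y,t))
      (hcont.comp (by fun_prop : Continuous fun p : ℝ × ℝ => (p.2, p.1))) 0 L
  · intro y hy
    rw [I3_inner hf hL (hbc y hy).1 (hbc y hy).2.1 (hbc y hy).2.2]
    positivity
end IBP

section IBP2
variable {f : E3 → ℝ} {L t : ℝ}

/-- the nonlinear term integrates to zero -/
lemma N_zero (hf : ContDiff ℝ (⊤ : ℕ∞) f) (hL : 0 ≤ L)
    (hbc0 : ∀ y ∈ Ioo (0:ℝ) L, f (0,y,t) = 0) (hbcL : ∀ y ∈ Ioo (0:ℝ) L, f (L,y,t) = 0) :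
    ∫ x in (0:ℝ)..L, ∫ y in (0:ℝ)..L, (f (x,y,t))^2 * Dd e1 f (x,y,t) = 0 := by
  have hcont : Continuous fun p : ℝ × ℝ => (f (p.1,p.2,t))^2 * Dd e1 f (p.1,p.2,t) :=
    ((cAt hf.continuous t).pow 2).mul (cAt (Dd_cont hf e1) t)
  rw [swap_le (f := fun x y => (f (x,y,t))^2 * Dd e1 f (x,y,t)) hcont hL hL]
  rw [intCongr (v := fun _ => (0:ℝ)) hL ?_]
  · simp
  intro y hy
  have hint : ∀ x : ℝ, HasDerivAt (fun x => (f (x,y,t))^3/3)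
      ((f (x,y,t))^2 * Dd e1 f (x,y,t)) x := by
    intro x
    have d0 := hasDerivAt_sliceX hf x y t
    have h := (d0.pow 3).div_const 3
    refine h.congr_deriv ?_
    push_cast
    ring
  have hc : Continuous fun x : ℝ => (f (x,y,t))^2 * Dd e1 f (x,y,t) :=
    ((hf.continuous.comp (by fun_prop)).pow 2).mul ((Dd_cont hf e1).comp (by fun_prop))
  rw [integral_eq_sub_of_hasDerivAt (fun x _ => hint x) (hc.intervalIntegrable 0 L)]
  rw [hbc0 y hy, hbcL y hy]
  ring

/-- the mixed third-derivative term integrates to zero -/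
lemma J_zero (hf : ContDiff ℝ (⊤ : ℕ∞) f) (hL : 0 ≤ L)
    (hbc0 : ∀ y ∈ Ioo (0:ℝ) L, f (0,y,t) = 0)
    (hbcL : ∀ y ∈ Ioo (0:ℝ) L, f (L,y,t) = 0)
    (hbcYL : ∀ y ∈ Ioo (0:ℝ) L, Dd e2 f (L,y,t) = 0)
    (hbcB : ∀ x ∈ Ioo (0:ℝ) L, f (x,0,t) = 0)
    (hbcT : ∀ x ∈ Ioo (0:ℝ) L, f (x,L,t) = 0) :
    ∫ x in (0:ℝ)..L, ∫ y in (0:ℝ)..L, f (x,y,t) * Dd e1 (Dd e2 (Dd e2 f)) (x,y,t) = 0 := by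
  set F1 := Dd e1 f with hF1def
  set F2 := Dd e2 f with hF2def
  set P := Dd e2 (Dd e2 f) with hPdef
  set Q := Dd e2 (Dd e1 f) with hQdef
  have hF1 : ContDiff ℝ (⊤ : ℕ∞) F1 := Dd_contDiff hf e1
  have hF2 : ContDiff ℝ (⊤ : ℕ∞) F2 := Dd_contDiff hf e2
  have hP : ContDiff ℝ (⊤ : ℕ∞) P := Dd_contDiff hF2 e2
  have hQ : ContDiff ℝ (⊤ : ℕ∞) Q := Dd_contDiff hF1 e2
  have hDP : ContDiff ℝ (⊤ : ℕ∞) (Dd e1 P) := Dd_contDiff hP e1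
  -- Step A : for y ∈ Ioo, ∫ x, f * (Dd e1 P) = - ∫ x, F1 * P
  have stepA : ∀ y ∈ Ioo (0:ℝ) L,
      (∫ x in (0:ℝ)..L, f (x,y,t) * Dd e1 P (x,y,t))
        = - ∫ x in (0:ℝ)..L, F1 (x,y,t) * P (x,y,t) := by
    intro y hy
    have hder : ∀ x : ℝ, HasDerivAt (fun x => f (x,y,t) * P (x,y,t))
        (F1 (x,y,t) * P (x,y,t) + f (x,y,t) * Dd e1 P (x,y,t)) x := fun x =>
      (hasDerivAt_sliceX hf x y t).mul (hasDerivAt_sliceX hP x y t)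
    have hc1 : Continuous fun x : ℝ => F1 (x,y,t) * P (x,y,t) :=
      (hF1.continuous.comp (by fun_prop)).mul (hP.continuous.comp (by fun_prop))
    have hc2 : Continuous fun x : ℝ => f (x,y,t) * Dd e1 P (x,y,t) :=
      (hf.continuous.comp (by fun_prop)).mul (hDP.continuous.comp (by fun_prop))
    have htot := integral_eq_sub_of_hasDerivAt (fun x _ => hder x)
      ((hc1.add hc2).intervalIntegrable 0 L)
    rw [hbc0 y hy, hbcL y hy] at htot
    rw [integral_add (hc1.intervalIntegrable 0 L) (hc2.intervalIntegrable 0 L)] at htot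
    have : (0:ℝ) * P (L,y,t) - 0 * P (0,y,t) = 0 := by ring
    rw [this] at htot
    linarith
  -- Step B : for x ∈ Ioo, ∫ y, F1 * P = - ∫ y, Q * F2
  have stepB : ∀ x ∈ Ioo (0:ℝ) L,
      (∫ y in (0:ℝ)..L, F1 (x,y,t) * P (x,y,t))
        = - ∫ y in (0:ℝ)..L, Q (x,y,t) * F2 (x,y,t) := by
    intro x hx
    have hder : ∀ y : ℝ, HasDerivAt (fun y => F1 (x,y,t) * F2 (x,y,t))
        (Q (x,y,t) * F2 (x,y,t) + F1 (x,y,t) * P (x,y,t)) y := fun y =>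
      (hasDerivAt_sliceY hF1 x y t).mul (hasDerivAt_sliceY hF2 x y t)
    have hc1 : Continuous fun y : ℝ => Q (x,y,t) * F2 (x,y,t) :=
      (hQ.continuous.comp (by fun_prop)).mul (hF2.continuous.comp (by fun_prop))
    have hc2 : Continuous fun y : ℝ => F1 (x,y,t) * P (x,y,t) :=
      (hF1.continuous.comp (by fun_prop)).mul (hP.continuous.comp (by fun_prop))
    have htot := integral_eq_sub_of_hasDerivAt (fun y _ => hder y)
      ((hc1.add hc2).intervalIntegrable 0 L)
    have hF1T : F1 (x,L,t) = 0 := by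
      rw [hF1def, ← derivX_eq hf]
      exact deriv_eq_zero_of_eqOn isOpen_Ioo hx (fun z hz => hbcT z hz)
    have hF1B : F1 (x,0,t) = 0 := by
      rw [hF1def, ← derivX_eq hf]
      exact deriv_eq_zero_of_eqOn isOpen_Ioo hx (fun z hz => hbcB z hz)
    rw [hF1T, hF1B] at htot
    rw [integral_add (hc1.intervalIntegrable 0 L) (hc2.intervalIntegrable 0 L)] at htot
    have : (0:ℝ) * F2 (x,L,t) - 0 * F2 (x,0,t) = 0 := by ring
    rw [this] at htot
    linarith
  -- Step C : for y ∈ Ioo, ∫ x, Q * F2 = 0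
  have stepC : ∀ y ∈ Ioo (0:ℝ) L,
      (∫ x in (0:ℝ)..L, Q (x,y,t) * F2 (x,y,t)) = 0 := by
    intro y hy
    have hder : ∀ x : ℝ, HasDerivAt (fun x => (F2 (x,y,t))^2/2)
        (Q (x,y,t) * F2 (x,y,t)) x := by
      intro x
      have d := hasDerivAt_sliceX hF2 x y t
      have h := (d.pow 2).div_const 2
      have hcomm : Dd e1 F2 (x,y,t) = Q (x,y,t) := by
        rw [hQdef, hF2def, Dd_comm hf e1 e2]
      refine h.congr_deriv ?_
      rw [← hcomm]
      push_cast
      ring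
    have hc : Continuous fun x : ℝ => Q (x,y,t) * F2 (x,y,t) :=
      (hQ.continuous.comp (by fun_prop)).mul (hF2.continuous.comp (by fun_prop))
    rw [integral_eq_sub_of_hasDerivAt (fun x _ => hder x) (hc.intervalIntegrable 0 L)]
    have hF20 : F2 (0,y,t) = 0 := by
      rw [hF2def, ← derivY_eq hf]
      exact deriv_eq_zero_of_eqOn isOpen_Ioo hy (fun z hz => hbc0 z hz)
    rw [hbcYL y hy, hF20]
    ring
  -- Assembly
  have hcPc : Continuous fun p : ℝ × ℝ => f (p.1,p.2,t) * Dd e1 P (p.1,p.2,t) :=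
    (cAt hf.continuous t).mul (cAt hDP.continuous t)
  have hcF1P : Continuous fun p : ℝ × ℝ => F1 (p.1,p.2,t) * P (p.1,p.2,t) :=
    (cAt hF1.continuous t).mul (cAt hP.continuous t)
  have hcQF2 : Continuous fun p : ℝ × ℝ => Q (p.1,p.2,t) * F2 (p.1,p.2,t) :=
    (cAt hQ.continuous t).mul (cAt hF2.continuous t)
  rw [swap_le (f := fun x y => f (x,y,t) * Dd e1 P (x,y,t)) hcPc hL hL]
  rw [intCongr (v := fun y => - ∫ x in (0:ℝ)..L, F1 (x,y,t) * P (x,y,t)) hL stepA]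
  rw [intervalIntegral.integral_neg]
  rw [← swap_le (f := fun x y => F1 (x,y,t) * P (x,y,t)) hcF1P hL hL]
  rw [intCongr (v := fun x => - ∫ y in (0:ℝ)..L, Q (x,y,t) * F2 (x,y,t)) hL stepB]
  rw [intervalIntegral.integral_neg, neg_neg]
  rw [swap_le (f := fun x y => Q (x,y,t) * F2 (x,y,t)) hcQF2 hL hL]
  rw [intCongr (v := fun _ => (0:ℝ)) hL stepC]
  simp
end IBP2


end MuAux

open MuAux

/-- A priori bound for the nonlinear μ-system:
`‖(ζ(t), ζ(t-h·))‖²_H ≤ e^{(ξ‖a‖_∞/h) t} ‖(ζ₀,z₀)‖²_H` for all `t ≥ 0`. -/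
theorem mu_apriori_bound
    (L α γ h μ₁ μ₂ ξ Ma : ℝ) (a : ℝ → ℝ → ℝ)
    (hL : 0 < L) (hα : 0 < α) (hγ : 0 < γ) (hh : 0 < h)
    (hμ₂ : 0 < μ₂) (hμ : μ₂ < μ₁)
    (ha : Coeff a) (hMa : IsEssSupOn L a Ma)
    (hξ₁ : h * μ₂ < ξ) (hξ₂ : ξ < h * (2*μ₁ - μ₂)) :
    ∀ ζ : ℝ → ℝ → ℝ → ℝ, IsMuSol L α γ h μ₁ μ₂ a ζ →
      ∀ t ≥ (0:ℝ),
        Hn2 L (ξ*Ma) (fun x y => ζ x y t) (fun x y ρ => ζ x y (t - ρ*h))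
          ≤ Real.exp ((ξ*Ma/h) * t) *
            Hn2 L (ξ*Ma) (fun x y => ζ x y 0) (fun x y ρ => ζ x y (-(ρ*h))) := by

  intro ζ hsol t ht
  obtain ⟨hS, hbc, hpde⟩ := hsol
  set Fz : E3 → ℝ := fun p => ζ p.1 p.2.1 p.2.2 with hFzdef
  have hFc : ContDiff ℝ (⊤ : ℕ∞) Fz := by rw [hFzdef]; exact hS
  have hcFz : Continuous Fz := hFc.continuous
  have hL' : (0:ℝ) ≤ L := hL.le
  have hξ0 : 0 < ξ := lt_trans (mul_pos hh hμ₂) hξ₁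
  -- translations of partial derivatives
  have hpXe : ∀ x y τ, pX ζ x y τ = Dd e1 Fz (x,y,τ) := by
    intro x y τ; rw [hFzdef]; exact derivX_eq hS x y τ
  have hpYe : ∀ x y τ, pY ζ x y τ = Dd e2 Fz (x,y,τ) := by
    intro x y τ; rw [hFzdef]; exact derivY_eq hS x y τ
  have hpTe : ∀ x y τ, pT ζ x y τ = Dd e3 Fz (x,y,τ) := by
    intro x y τ; rw [hFzdef]; exact derivT_eq hS x y τ
  have hpX3e : ∀ x y τ, pX3 ζ x y τ = Dd e1 (Dd e1 (Dd e1 Fz)) (x,y,τ) := by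
    intro x y τ
    show iteratedDeriv 3 (fun s => ζ s y τ) x = _
    rw [show (3:ℕ) = 2+1 from rfl, iteratedDeriv_succ, show (2:ℕ) = 1+1 from rfl,
      iteratedDeriv_succ, iteratedDeriv_one]
    have h1 : deriv (fun s => ζ s y τ) = fun s => Dd e1 Fz (s,y,τ) := by
      funext s; exact hpXe s y τ
    rw [h1]
    have h2 : deriv (fun s => Dd e1 Fz (s,y,τ)) = fun s => Dd e1 (Dd e1 Fz) (s,y,τ) := by
      funext s; exact derivX_eq (Dd_contDiff hFc e1) s y τ
    rw [h2]
    exact derivX_eq (Dd_contDiff (Dd_contDiff hFc e1) e1) x y τ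
  have hpXYYe : ∀ x y τ, pXYY ζ x y τ = Dd e1 (Dd e2 (Dd e2 Fz)) (x,y,τ) := by
    intro x y τ
    show deriv (fun s => iteratedDeriv 2 (fun r => ζ s r τ) y) x = _
    have hinner : (fun s => iteratedDeriv 2 (fun r => ζ s r τ) y)
        = fun s => Dd e2 (Dd e2 Fz) (s,y,τ) := by
      funext s
      rw [show (2:ℕ) = 1+1 from rfl, iteratedDeriv_succ, iteratedDeriv_one]
      have h1 : deriv (fun r => ζ s r τ) = fun r => Dd e2 Fz (s,r,τ) := by
        funext r; exact hpYe s r τ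
      rw [h1]
      exact derivY_eq (Dd_contDiff hFc e2) s y τ
    rw [hinner]
    exact derivX_eq (Dd_contDiff (Dd_contDiff hFc e2) e2) x y τ
  -- essential supremum facts
  have hMa0 : 0 ≤ Ma := by
    apply hMa.2
    intro c hc
    by_contra hneg
    push_neg at hneg
    have hc2 : ∀ᵐ p ∂(volume.restrict (Ioo (0:ℝ) L ×ˢ Ioo (0:ℝ) L)), a p.1 p.2 ≤ c := hc
    have hfalse : ∀ᵐ p ∂(volume.restrict (Ioo (0:ℝ) L ×ˢ Ioo (0:ℝ) L)), False :=
      hc2.mono (fun p hp => absurd hp (not_le.2 (lt_of_lt_of_le hneg (ha.2.1 p.1 p.2))))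
    rw [Filter.eventually_false_iff_eq_bot, ae_eq_bot] at hfalse
    have hc' : volume (Ioo (0:ℝ) L ×ˢ Ioo (0:ℝ) L) = 0 := by
      have := congrArg (fun μ : Measure (ℝ × ℝ) => μ univ) hfalse
      simpa [Measure.restrict_apply_univ] using this
    have hpos : (0:ENNReal) < volume (Ioo (0:ℝ) L ×ˢ Ioo (0:ℝ) L) := by
      rw [Measure.volume_eq_prod, Measure.prod_prod, Real.volume_Ioo]
      simp only [sub_zero]
      exact ENNReal.mul_pos (by simpa using hL) (by simpa using hL)
    exact absurd hc' (ne_of_gt hpos)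
  have haeMa : ∀ᵐ p ∂(volume.restrict (Ioo (0:ℝ) L ×ˢ Ioo (0:ℝ) L)), a p.1 p.2 ≤ Ma := by
    have hS' : ∀ ε > (0:ℝ), ∃ c, (∀ᵐ p ∂(volume.restrict (Ioo (0:ℝ) L ×ˢ Ioo (0:ℝ) L)),
        a p.1 p.2 ≤ c) ∧ c < Ma + ε := by
      intro ε hε
      by_contra hcon
      push_neg at hcon
      have : Ma + ε ≤ Ma := hMa.2 (fun c hc => hcon c hc)
      linarith
    have hseq : ∀ n : ℕ, ∀ᵐ p ∂(volume.restrict (Ioo (0:ℝ) L ×ˢ Ioo (0:ℝ) L)),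
        a p.1 p.2 ≤ Ma + 1/(n+1) := by
      intro n
      obtain ⟨c, hcS, hclt⟩ := hS' (1/(n+1)) (by positivity)
      filter_upwards [hcS] with p hp
      linarith
    rw [← ae_all_iff] at hseq
    filter_upwards [hseq] with p hp
    have h1 : Filter.Tendsto (fun n : ℕ => 1/((n:ℝ)+1)) Filter.atTop (nhds 0) :=
      tendsto_one_div_add_atTop_nhds_zero_nat
    have hTend : Filter.Tendsto (fun n : ℕ => Ma + 1/((n:ℝ)+1)) Filter.atTop (nhds Ma) := by
      simpa using Filter.Tendsto.add (tendsto_const_nhds (x := Ma)) h1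
    exact ge_of_tendsto hTend (Filter.Eventually.of_forall fun n => hp n)
  have haeIter : ∀ᵐ x ∂(volume.restrict (Ioo (0:ℝ) L)),
      ∀ᵐ y ∂(volume.restrict (Ioo (0:ℝ) L)), a x y ≤ Ma := by
    have hmeas : (volume : Measure (ℝ × ℝ)).restrict (Ioo (0:ℝ) L ×ˢ Ioo (0:ℝ) L)
        = (volume.restrict (Ioo (0:ℝ) L)).prod (volume.restrict (Ioo (0:ℝ) L)) := by
      rw [Measure.volume_eq_prod, Measure.prod_restrict]
    rw [hmeas] at haeMa
    exact Measure.ae_ae_of_ae_prod haeMa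
  -- the energy functionals
  set K : ℝ := ξ * Ma / h with hK
  have hK0 : 0 ≤ K := by rw [hK]; exact div_nonneg (mul_nonneg hξ0.le hMa0) hh.le
  set A : ℝ → ℝ := fun τ => ∫ x in (0:ℝ)..L, ∫ y in (0:ℝ)..L, (Fz (x,y,τ))^2 with hA
  set A1 : ℝ → ℝ := fun τ => ∫ x in (0:ℝ)..L, ∫ y in (0:ℝ)..L,
    2 * Fz (x,y,τ) * Dd e3 Fz (x,y,τ) with hA1
  set B : ℝ → ℝ := fun τ => ∫ x in (0:ℝ)..L, ∫ y in (0:ℝ)..L,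
    ∫ ρ in (0:ℝ)..1, (Fz (x,y,(τ - ρ*h)))^2 with hB
  set Φ : ℝ → ℝ → ℝ → ℝ := fun x y τ =>
    (∫ s in (0:ℝ)..τ, (Fz (x,y,s))^2) - ∫ s in (0:ℝ)..(τ-h), (Fz (x,y,s))^2 with hΦ
  set EF : ℝ → ℝ := fun τ => A τ + (ξ*Ma) * B τ with hEF
  have hrepack : Continuous fun p : E3 => ((p.1, p.2.1, p.2.2) : E3) := by fun_prop
  have hsqE3 : Continuous fun p : E3 => (Fz (p.1, p.2.1, p.2.2))^2 :=
    (hcFz.comp hrepack).pow 2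
  -- continuity and nonnegativity of A and B
  have hAc : Continuous A := by
    rw [hA]
    exact cont_dbl (F := fun x y τ => (Fz (x,y,τ))^2) hsqE3 0 L 0 L
  have hAnn : ∀ τ, 0 ≤ A τ := by
    intro τ
    simp only [hA]
    refine intNonneg hL' (cont_param (f := fun x y => (Fz (x,y,τ))^2)
      ((cAt hcFz τ).pow 2) 0 L) (fun x _ => ?_)
    exact intNonneg hL' ((hcFz.comp (by fun_prop)).pow 2) (fun y _ => sq_nonneg _)
  have hinB : ∀ τ : ℝ, Continuous fun q : ℝ × ℝ =>
      ∫ ρ in (0:ℝ)..1, (Fz (q.1, q.2, (τ - ρ*h)))^2 := by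
    intro τ
    refine continuous_parametric_intervalIntegral_of_continuous' (μ := volume)
      (f := fun q : ℝ × ℝ => fun ρ => (Fz (q.1, q.2, (τ - ρ*h)))^2) ?_ 0 1
    exact (hcFz.comp (by fun_prop : Continuous fun p : (ℝ × ℝ) × ℝ =>
      ((p.1.1, p.1.2, (τ - p.2*h)) : E3))).pow 2
  have hBnn : ∀ τ, 0 ≤ B τ := by
    intro τ
    simp only [hB]
    refine intNonneg hL' (cont_param (f := fun x y =>
      ∫ ρ in (0:ℝ)..1, (Fz (x,y,(τ - ρ*h)))^2) (hinB τ) 0 L) (fun x _ => ?_)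
    refine intNonneg hL' ((hinB τ).comp
      (by fun_prop : Continuous fun y : ℝ => ((x, y) : ℝ × ℝ))) (fun y _ => ?_)
    exact intNonneg zero_le_one ((hcFz.comp (by fun_prop)).pow 2) (fun ρ _ => sq_nonneg _)
  -- B in terms of Φ
  have hBeq : B = fun τ => h⁻¹ * ∫ x in (0:ℝ)..L, ∫ y in (0:ℝ)..L, Φ x y τ := by
    funext τ
    simp only [hB]
    have hpt : ∀ x y : ℝ, (∫ ρ in (0:ℝ)..1, (Fz (x,y,(τ - ρ*h)))^2)
        = h⁻¹ * Φ x y τ := by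
      intro x y
      have hcomp := integral_comp_mul_right (a := (0:ℝ)) (b := 1)
        (fun u => (Fz (x,y,(τ - u)))^2) hh.ne'
      simp only [one_mul, zero_mul, smul_eq_mul] at hcomp
      rw [hcomp]
      congr 1
      rw [integral_comp_sub_left (fun u => (Fz (x,y,u))^2) τ, sub_zero]
      simp only [hΦ]
      have hq : Continuous fun u : ℝ => (Fz (x,y,u))^2 := (hcFz.comp (by fun_prop)).pow 2
      have hadj := integral_add_adjacent_intervals (a := (0:ℝ)) (b := τ-h) (c := τ)
        (f := fun u => (Fz (x,y,u))^2) (μ := volume) (hq.intervalIntegrable 0 (τ-h))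
        (hq.intervalIntegrable (τ-h) τ)
      linarith [hadj]
    rw [integral_congr (fun x _ => integral_congr (fun y _ => hpt x y))]
    exact dbl_const_mul (f := fun x y => Φ x y τ)
  have hΦcE3 : Continuous fun p : E3 => Φ p.1 p.2.1 p.2.2 := by
    simp only [hΦ]
    apply Continuous.sub
    · exact continuous_parametric_intervalIntegral_of_continuous (μ := volume)
        (f := fun p : E3 => fun s => (Fz (p.1, p.2.1, s))^2)
        (by fun_prop) (by fun_prop : Continuous fun p : E3 => p.2.2)
    · exact continuous_parametric_intervalIntegral_of_continuous (μ := volume)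
        (f := fun p : E3 => fun s => (Fz (p.1, p.2.1, s))^2)
        (by fun_prop)
        (by fun_prop : Continuous fun p : E3 => p.2.2 - h)
  have hBc : Continuous B := by
    rw [hBeq]
    exact continuous_const.mul (cont_dbl (F := Φ) hΦcE3 0 L 0 L)
  have hEFc : Continuous EF := by
    rw [hEF]
    exact hAc.add (continuous_const.mul hBc)
  -- derivative of A
  have hgtA1 : Continuous fun p : E3 => 2 * Fz (p.1,p.2.1,p.2.2) * Dd e3 Fz (p.1,p.2.1,p.2.2) :=
    (continuous_const.mul (hcFz.comp hrepack)).mul ((Dd_cont hFc e3).comp hrepack)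
  have hAd : ∀ τ : ℝ, 0 < τ → HasDerivAt A (A1 τ) τ := by
    intro τ hτ
    have hder : ∀ x y s, HasDerivAt (fun s => (Fz (x,y,s))^2)
        (2 * Fz (x,y,s) * Dd e3 Fz (x,y,s)) s := by
      intro x y s
      have d := (hasDerivAt_sliceT hFc x y s).pow 2
      refine d.congr_deriv ?_
      push_cast; ring
    have hres := hasDerivAt_dbl (L := L) hL' (g := fun x y s => (Fz (x,y,s))^2)
      (gt := fun x y s => 2 * Fz (x,y,s) * Dd e3 Fz (x,y,s)) hsqE3 hgtA1
      (fun x y s => hder x y s) hτ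
    rw [hA, hA1]
    exact hres
  -- derivative of B
  have hBd : ∀ τ : ℝ, 0 < τ → HasDerivAt B (h⁻¹ * (A τ - A (τ - h))) τ := by
    intro τ hτ
    have hgt : Continuous fun p : E3 =>
        ((Fz (p.1,p.2.1,p.2.2))^2 - (Fz (p.1,p.2.1,(p.2.2 - h)))^2) :=
      hsqE3.sub ((hcFz.comp (by fun_prop : Continuous fun p : E3 =>
        ((p.1, p.2.1, p.2.2 - h) : E3))).pow 2)
    have hder : ∀ x y s, HasDerivAt (Φ x y)
        ((Fz (x,y,s))^2 - (Fz (x,y,(s - h)))^2) s := by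
      intro x y s
      simp only [hΦ]
      have hq : Continuous fun u : ℝ => (Fz (x,y,u))^2 := (hcFz.comp (by fun_prop)).pow 2
      have d1 : HasDerivAt (fun τ' => ∫ u in (0:ℝ)..τ', (Fz (x,y,u))^2)
          ((Fz (x,y,s))^2) s := (hq.integral_hasStrictDerivAt 0 s).hasDerivAt
      have d2 : HasDerivAt (fun τ' => ∫ u in (0:ℝ)..(τ' - h), (Fz (x,y,u))^2)
          ((Fz (x,y,(s - h)))^2) s := by
        have dd : HasDerivAt (fun τ' => ∫ u in (0:ℝ)..τ', (Fz (x,y,u))^2)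
            ((Fz (x,y,(s - h)))^2) (s - h) :=
          (hq.integral_hasStrictDerivAt 0 (s-h)).hasDerivAt
        have := HasDerivAt.comp s dd ((hasDerivAt_id s).sub_const h)
        exact this.congr_deriv (mul_one _)
      exact d1.sub d2
    have hΦd := hasDerivAt_dbl (L := L) hL' (g := Φ)
      (gt := fun x y s => ((Fz (x,y,s))^2 - (Fz (x,y,(s - h)))^2)) hΦcE3 hgt hder hτ
    have hsplit : (∫ x in (0:ℝ)..L, ∫ y in (0:ℝ)..L,
        ((Fz (x,y,τ))^2 - (Fz (x,y,(τ - h)))^2)) = A τ - A (τ - h) := by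
      rw [dbl_sub (f := fun x y => (Fz (x,y,τ))^2) (g := fun x y => (Fz (x,y,(τ - h)))^2)
        ((cAt hcFz τ).pow 2) ((cAt hcFz (τ - h)).pow 2)]
    have hΦd' : HasDerivAt (fun τ' => ∫ x in (0:ℝ)..L, ∫ y in (0:ℝ)..L, Φ x y τ')
        (A τ - A (τ - h)) τ := hsplit ▸ hΦd
    rw [hBeq]
    exact hΦd'.const_mul h⁻¹
  -- derivative of EF
  have hEFd : ∀ τ : ℝ, 0 < τ → HasDerivAt EF
      (A1 τ + (ξ*Ma) * (h⁻¹ * (A τ - A (τ - h)))) τ := by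
    intro τ hτ
    rw [hEF]
    exact (hAd τ hτ).add ((hBd τ hτ).const_mul (ξ*Ma))
  -- the key energy inequality
  have hkey : ∀ τ : ℝ, 0 < τ → A1 τ ≤ μ₂ * Ma * A (τ - h) := by
    intro τ hτ
    have hby := (hbc τ hτ).1
    have hbx := (hbc τ hτ).2
    have hb1 : ∀ y ∈ Ioo (0:ℝ) L, Fz (0,y,τ) = 0 := by
      intro y hy; rw [hFzdef]; exact (hby y hy).1
    have hb2 : ∀ y ∈ Ioo (0:ℝ) L, Fz (L,y,τ) = 0 := by
      intro y hy; rw [hFzdef]; exact (hby y hy).2.1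
    have hb3 : ∀ y ∈ Ioo (0:ℝ) L, Dd e1 Fz (L,y,τ) = 0 := by
      intro y hy; rw [← hpXe]; exact (hby y hy).2.2.1
    have hb4 : ∀ y ∈ Ioo (0:ℝ) L, Dd e2 Fz (L,y,τ) = 0 := by
      intro y hy; rw [← hpYe]; exact (hby y hy).2.2.2
    have hb5 : ∀ x ∈ Ioo (0:ℝ) L, Fz (x,0,τ) = 0 := by
      intro x hx; rw [hFzdef]; exact (hbx x hx).1
    have hb6 : ∀ x ∈ Ioo (0:ℝ) L, Fz (x,L,τ) = 0 := by
      intro x hx; rw [hFzdef]; exact (hbx x hx).2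
    -- continuity of the comparison function pieces
    have hc1 : Continuous fun p : ℝ × ℝ =>
        Fz (p.1,p.2,τ) * Dd e1 (Dd e1 (Dd e1 Fz)) (p.1,p.2,τ) :=
      (cAt hcFz τ).mul (cAt (Dd_cont (Dd_contDiff (Dd_contDiff hFc e1) e1) e1) τ)
    have hc2 : Continuous fun p : ℝ × ℝ =>
        Fz (p.1,p.2,τ) * Dd e1 (Dd e2 (Dd e2 Fz)) (p.1,p.2,τ) :=
      (cAt hcFz τ).mul (cAt (Dd_cont (Dd_contDiff (Dd_contDiff hFc e2) e2) e1) τ)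
    have hc3 : Continuous fun p : ℝ × ℝ =>
        (Fz (p.1,p.2,τ))^2 * Dd e1 Fz (p.1,p.2,τ) :=
      ((cAt hcFz τ).pow 2).mul (cAt (Dd_cont hFc e1) τ)
    have hc4 : Continuous fun p : ℝ × ℝ => (Fz (p.1,p.2,(τ - h)))^2 :=
      (cAt hcFz (τ - h)).pow 2
    have hcW : Continuous fun p : ℝ × ℝ =>
        ((-2*α) * (Fz (p.1,p.2,τ) * Dd e1 (Dd e1 (Dd e1 Fz)) (p.1,p.2,τ))
         + ((-2*γ) * (Fz (p.1,p.2,τ) * Dd e1 (Dd e2 (Dd e2 Fz)) (p.1,p.2,τ))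
         + ((-2) * ((Fz (p.1,p.2,τ))^2 * Dd e1 Fz (p.1,p.2,τ))
         + (μ₂*Ma) * (Fz (p.1,p.2,(τ - h)))^2))) :=
      (continuous_const.mul hc1).add ((continuous_const.mul hc2).add
        ((continuous_const.mul hc3).add (continuous_const.mul hc4)))
    have hmono : A1 τ ≤ ∫ x in (0:ℝ)..L, ∫ y in (0:ℝ)..L,
        ((-2*α) * (Fz (x,y,τ) * Dd e1 (Dd e1 (Dd e1 Fz)) (x,y,τ))
         + ((-2*γ) * (Fz (x,y,τ) * Dd e1 (Dd e2 (Dd e2 Fz)) (x,y,τ))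
         + ((-2) * ((Fz (x,y,τ))^2 * Dd e1 Fz (x,y,τ))
         + (μ₂*Ma) * (Fz (x,y,(τ - h)))^2))) := by
      simp only [hA1]
      refine dbl_mono hL' ((continuous_const.mul (cAt hcFz τ)).mul (cAt (Dd_cont hFc e3) τ))
        hcW ?_
      filter_upwards [haeIter, ae_restrict_mem measurableSet_Ioo] with x hx hxm
      filter_upwards [hx, ae_restrict_mem measurableSet_Ioo] with y hy hym
      have heq := hpde x hxm y hym τ hτ
      rw [hpTe, hpX3e, hpXYYe, hpXe] at heq
      have hv1 : ζ x y τ = Fz (x,y,τ) := by rw [hFzdef]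
      have hv2 : ζ x y (τ - h) = Fz (x,y,(τ - h)) := by rw [hFzdef]
      rw [hv1, hv2] at heq
      have ha0 : 0 ≤ a x y := ha.2.1 x y
      have heq2 : 2 * Fz (x,y,τ) * Dd e3 Fz (x,y,τ)
          = (-2*α) * (Fz (x,y,τ) * Dd e1 (Dd e1 (Dd e1 Fz)) (x,y,τ))
            + ((-2*γ) * (Fz (x,y,τ) * Dd e1 (Dd e2 (Dd e2 Fz)) (x,y,τ))
            + ((-2) * ((Fz (x,y,τ))^2 * Dd e1 Fz (x,y,τ))
            + (-2 * a x y) * (μ₁ * (Fz (x,y,τ))^2 + μ₂ * (Fz (x,y,τ) * Fz (x,y,(τ - h)))))) := by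
        linear_combination (2 * Fz (x,y,τ)) * heq
      rw [heq2]
      have t1 : 0 ≤ (a x y * μ₂) * (Fz (x,y,τ) + Fz (x,y,(τ - h)))^2 :=
        mul_nonneg (mul_nonneg ha0 hμ₂.le) (sq_nonneg _)
      have t2 : 0 ≤ (a x y * (2*μ₁ - μ₂)) * (Fz (x,y,τ))^2 :=
        mul_nonneg (mul_nonneg ha0 (by linarith)) (sq_nonneg _)
      have t3 : 0 ≤ ((Ma - a x y) * μ₂) * (Fz (x,y,(τ - h)))^2 :=
        mul_nonneg (mul_nonneg (by linarith) hμ₂.le) (sq_nonneg _)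
      nlinarith [t1, t2, t3]
    rw [dbl_add (continuous_const.mul hc1) ((continuous_const.mul hc2).add
        ((continuous_const.mul hc3).add (continuous_const.mul hc4))),
      dbl_add (continuous_const.mul hc2) ((continuous_const.mul hc3).add
        (continuous_const.mul hc4)),
      dbl_add (continuous_const.mul hc3) (continuous_const.mul hc4),
      dbl_const_mul, dbl_const_mul, dbl_const_mul, dbl_const_mul] at hmono
    have hI3 := I3_nonneg hFc hL' (fun y hy => ⟨hb1 y hy, hb2 y hy, hb3 y hy⟩) (t := τ)
    have hJ := J_zero hFc hL' hb1 hb2 hb4 hb5 hb6 (t := τ)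
    have hN := N_zero hFc hL' hb1 hb2 (t := τ)
    rw [hJ, hN] at hmono
    have hAh : A (τ - h) = ∫ x in (0:ℝ)..L, ∫ y in (0:ℝ)..L, (Fz (x,y,(τ - h)))^2 := by
      simp only [hA]
    rw [← hAh] at hmono
    have hneg : (-2*α) * (∫ x in (0:ℝ)..L, ∫ y in (0:ℝ)..L,
        Fz (x,y,τ) * Dd e1 (Dd e1 (Dd e1 Fz)) (x,y,τ)) ≤ 0 :=
      mul_nonpos_of_nonpos_of_nonneg (by linarith) hI3
    linarith [hmono, hneg]
  -- Gronwall
  set G : ℝ → ℝ := fun τ => Real.exp (-K * τ) * EF τ with hG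
  have hGc : Continuous G := by
    rw [hG]
    exact ((Real.continuous_exp.comp (by fun_prop)).mul hEFc)
  have hGder : ∀ τ : ℝ, 0 < τ → HasDerivAt G
      (Real.exp (-K*τ) * ((A1 τ + (ξ*Ma) * (h⁻¹ * (A τ - A (τ - h)))) - K * EF τ)) τ := by
    intro τ hτ
    rw [hG]
    have he : HasDerivAt (fun τ' : ℝ => Real.exp (-K * τ')) (Real.exp (-K*τ) * (-K)) τ := by
      have := ((hasDerivAt_id τ).const_mul (-K)).exp
      simpa [mul_comm] using this
    have hcomb := he.mul (hEFd τ hτ)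
    refine hcomb.congr_deriv ?_
    ring
  have hGnonpos : ∀ τ : ℝ, 0 < τ → deriv G τ ≤ 0 := by
    intro τ hτ
    rw [(hGder τ hτ).deriv]
    apply mul_nonpos_of_nonneg_of_nonpos (Real.exp_nonneg _)
    have hd := hkey τ hτ
    have h1 : 0 ≤ A τ := hAnn τ
    have h2 : 0 ≤ A (τ - h) := hAnn _
    have h3 : 0 ≤ B τ := hBnn τ
    have hEFτ : EF τ = A τ + (ξ*Ma) * B τ := by rw [hEF]
    have hKalt : K = ξ * Ma * h⁻¹ := by rw [hK]; ring
    have hμξ : μ₂ ≤ ξ * h⁻¹ := by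
      rw [← div_eq_mul_inv]
      exact (le_div_iff₀ hh).2 (by linarith)
    have t1 : 0 ≤ Ma * A (τ - h) * (ξ * h⁻¹ - μ₂) :=
      mul_nonneg (mul_nonneg hMa0 h2) (by linarith)
    have t2 : 0 ≤ K * ((ξ*Ma) * B τ) :=
      mul_nonneg hK0 (mul_nonneg (mul_nonneg hξ0.le hMa0) h3)
    rw [hEFτ, hKalt]
    rw [hKalt] at t2
    nlinarith [t1, t2, hd]
  have hanti : AntitoneOn G (Ici (0:ℝ)) := by
    apply antitoneOn_of_deriv_nonpos (convex_Ici 0) hGc.continuousOn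
    · intro τ hτ
      rw [interior_Ici] at hτ
      exact (hGder τ hτ).differentiableAt.differentiableWithinAt
    · intro τ hτ
      rw [interior_Ici] at hτ
      exact hGnonpos τ hτ
  have hGle : G t ≤ G 0 := hanti self_mem_Ici ht ht
  have hG0 : G 0 = EF 0 := by rw [hG]; simp
  have hGt : G t = Real.exp (-K*t) * EF t := by rw [hG]
  have hexp : Real.exp (-K*t) * EF t ≤ EF 0 := by rw [← hGt, ← hG0]; exact hGle
  have hfin : EF t ≤ Real.exp (K*t) * EF 0 := by
    have h1 : Real.exp (K*t) * Real.exp (-K*t) = 1 := by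
      rw [← Real.exp_add, show K*t + -K*t = 0 by ring, Real.exp_zero]
    calc EF t = Real.exp (K*t) * (Real.exp (-K*t) * EF t) := by
          rw [← mul_assoc, h1, one_mul]
      _ ≤ Real.exp (K*t) * EF 0 :=
          mul_le_mul_of_nonneg_left hexp (Real.exp_nonneg _)
  have hEFt : Hn2 L (ξ*Ma) (fun x y => ζ x y t) (fun x y ρ => ζ x y (t - ρ*h)) = EF t := by
    simp only [Hn2, hEF, hA, hB, hFzdef]
  have hEF0 : Hn2 L (ξ*Ma) (fun x y => ζ x y 0) (fun x y ρ => ζ x y (-(ρ*h))) = EF 0 := by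
    simp only [Hn2, hEF, hA, hB, hFzdef, zero_sub]
  rw [hEFt, hEF0]
  exact hfin
end
end
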